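/- arXiv:math/0403217 — 9 statements merged into one kernel-verified Lean document; each statement's English description precedes it below -/
import Mathlib

section
/- Let k ≥ 1 and ℓ > 2k be integers and set δ := (k, k−1, …, 1) ∈ ℝ^k. For every λ ∈ C_ℓ, the complex number (Σ_{w∈W} ε(w)·exp(⟨λ+ρ, w(δ)⟩·πi/ℓ)) / (Σ_{w∈W} ε(w)·exp(⟨ρ, w(δ)⟩·πi/ℓ)) is a strictly positive real number (in particular the denominator is nonzero). [This is the statement that the character dim^{Λ_k}_F(V_λ) evaluated at q = e^{πi/ℓ} is positive for all λ in the Weyl alcove.] -/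
open scoped BigOperators

noncomputable section

/-- The sign vector entry of a sign choice `s : Fin k → Bool` (`true ↦ 1`, `false ↦ -1`). -/
def sgnEntry {k : ℕ} (s : Fin k → Bool) (i : Fin k) : ℝ := if s i then 1 else -1

/-- The action of the signed permutation `(σ, s)` of the hyperoctahedral group on `ℝ^k`:
`w(x)_i = s_i · x_{σ⁻¹(i)}`. -/
def wAct {k : ℕ} (σ : Equiv.Perm (Fin k)) (s : Fin k → Bool) (x : Fin k → ℝ) :
    Fin k → ℝ := fun i => sgnEntry s i * x (σ.symm i)

/-- The signature `ε(w) = sign(σ) · ∏ᵢ sᵢ` of the signed permutation `(σ, s)`. -/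
def epsSign {k : ℕ} (σ : Equiv.Perm (Fin k)) (s : Fin k → Bool) : ℤ :=
  (Equiv.Perm.sign σ : ℤ) * ∏ i, (if s i then (1 : ℤ) else -1)

/-- The normalized bilinear form `⟨x, y⟩ = 2 ∑ᵢ xᵢ yᵢ`. -/
def form {k : ℕ} (x y : Fin k → ℝ) : ℝ := 2 * ∑ i, x i * y i

/-- `ρ = (k - 1/2, k - 3/2, …, 1/2)`, half the sum of the positive roots of type `B_k`. -/
def rho (k : ℕ) : Fin k → ℝ := fun i => (k : ℝ) - (i : ℝ) - 1 / 2

/-- `δ = (k, k-1, …, 1)`. -/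
def delta (k : ℕ) : Fin k → ℝ := fun i => (k : ℝ) - (i : ℝ)

open Polynomial in
noncomputable def cheb : ℕ → ℝ[X]
  | 0 => 1
  | 1 => Polynomial.X
  | (n+2) => Polynomial.X * cheb (n+1) - Polynomial.C (1/4 : ℝ) * cheb n

open Polynomial in
lemma cheb_aux : ∀ n : ℕ, ((cheb n).Monic ∧ (cheb n).natDegree = n)
    ∧ ((cheb (n+1)).Monic ∧ (cheb (n+1)).natDegree = n+1) := by
  intro n
  induction n with
  | zero => refine ⟨⟨monic_one, natDegree_one⟩, ?_, ?_⟩ <;> simp [cheb]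
  | succ n ih =>
    obtain ⟨⟨hm0, hd0⟩, hm1, hd1⟩ := ih
    have hmul : ((X : ℝ[X]) * cheb (n+1)).Monic := monic_X.mul hm1
    have hdm : ((X : ℝ[X]) * cheb (n+1)).natDegree = n + 2 := by
      rw [monic_X.natDegree_mul hm1, hd1, natDegree_X]; ring
    have hlt : degree (C (1/4 : ℝ) * cheb n) < ((X : ℝ[X]) * cheb (n+1)).degree := by
      calc degree (C (1/4 : ℝ) * cheb n) ≤ ((C (1/4 : ℝ) * cheb n)).natDegree :=
            degree_le_natDegree
        _ = ((n : ℕ) : WithBot ℕ) := by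
            rw [natDegree_C_mul (by norm_num : (1/4 : ℝ) ≠ 0), hd0]
        _ < ((n+2 : ℕ) : WithBot ℕ) := by exact_mod_cast Nat.lt_add_of_pos_right two_pos
        _ = ((X : ℝ[X]) * cheb (n+1)).degree := by
            rw [degree_eq_natDegree hmul.ne_zero, hdm]
    have hmon : (cheb (n+2)).Monic := by
      show ((X : ℝ[X]) * cheb (n+1) - C (1/4 : ℝ) * cheb n).Monic
      exact hmul.sub_of_left hlt
    refine ⟨⟨hm1, hd1⟩, hmon, ?_⟩
    show ((X : ℝ[X]) * cheb (n+1) - C (1/4 : ℝ) * cheb n).natDegree = n + 2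
    rw [← hdm]
    exact natDegree_sub_eq_left_of_natDegree_lt (by
      rw [hdm, natDegree_C_mul (by norm_num : (1/4 : ℝ) ≠ 0), hd0]; omega)

lemma cheb_monic (n : ℕ) : (cheb n).Monic := (cheb_aux n).1.1
lemma cheb_natDegree (n : ℕ) : (cheb n).natDegree = n := (cheb_aux n).1.2

lemma cheb_eval (θ : ℝ) : ∀ n : ℕ,
    (2:ℝ)^n * ((cheb n).eval (Real.cos θ) * Real.sin θ) = Real.sin (((n:ℝ)+1) * θ) := by
  have key : ∀ n : ℕ, ((2:ℝ)^n * ((cheb n).eval (Real.cos θ) * Real.sin θ)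
        = Real.sin (((n:ℝ)+1) * θ))
      ∧ ((2:ℝ)^(n+1) * ((cheb (n+1)).eval (Real.cos θ) * Real.sin θ)
        = Real.sin ((((n:ℝ)+1)+1) * θ)) := by
    intro n
    induction n with
    | zero =>
      constructor
      · simp [cheb]
      · show (2:ℝ)^1 * ((Polynomial.X (R := ℝ)).eval (Real.cos θ) * Real.sin θ) = _
        rw [Polynomial.eval_X]
        rw [show (((0:ℕ):ℝ)+1+1) * θ = 2*θ by push_cast; ring, Real.sin_two_mul]
        ring
    | succ n ih =>
      obtain ⟨ih0, ih1⟩ := ih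
      constructor
      · push_cast
        linear_combination ih1
      push_cast
      show (2:ℝ)^(n+2) * ((Polynomial.X * cheb (n+1)
          - Polynomial.C (1/4 : ℝ) * cheb n).eval (Real.cos θ) * Real.sin θ) = _
      simp only [Polynomial.eval_sub, Polynomial.eval_mul, Polynomial.eval_X, Polynomial.eval_C]
      have hadd := Real.sin_add (((n:ℝ)+2) * θ) θ
      have hsub := Real.sin_sub (((n:ℝ)+2) * θ) θ
      have e3 : (((n:ℝ)+1)+1+1) * θ = ((n:ℝ)+2) * θ + θ := by ring
      have e1 : (((n:ℝ)+1)) * θ = ((n:ℝ)+2) * θ - θ := by ring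
      have e2 : (((n:ℝ)+1)+1) * θ = ((n:ℝ)+2) * θ := by ring
      rw [e2] at ih1
      rw [e1] at ih0
      rw [e3, hadd]
      rw [hsub] at ih0
      linear_combination (2 * Real.cos θ) * ih1 - ih0
  exact fun n => (key n).1

lemma det_sin_pos {k : ℕ} {θ : Fin k → ℝ} (h0 : ∀ i, 0 < θ i) (hπ : ∀ i, θ i < Real.pi)
    (hm : ∀ i j : Fin k, i < j → θ j < θ i) :
    0 < (Matrix.of fun i j : Fin k => Real.sin ((((j:ℕ):ℝ) + 1) * θ i)).det := by
  have hA : (Matrix.of fun i j : Fin k => Real.sin ((((j:ℕ):ℝ)+1) * θ i))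
      = Matrix.of fun i j : Fin k => (fun j : Fin k => (2:ℝ)^(j:ℕ)) j *
          (Matrix.of fun i j : Fin k => Real.sin (θ i) *
            (Matrix.of fun i j : Fin k => (cheb (j:ℕ)).eval (Real.cos (θ i))) i j) i j := by
    ext i j
    simp only [Matrix.of_apply]
    rw [← cheb_eval (θ i) (j:ℕ)]
    ring
  rw [hA, Matrix.det_mul_row, Matrix.det_mul_column]
  rw [show (Matrix.of fun i j : Fin k => (cheb (j:ℕ)).eval (Real.cos (θ i))).det
      = (Matrix.vandermonde fun i => Real.cos (θ i)).det from
    (Matrix.det_eval_matrixOfPolynomials_eq_det_vandermonde _ _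
      (fun i => cheb_natDegree (i:ℕ)) (fun i => cheb_monic (i:ℕ))).symm]
  rw [Matrix.det_vandermonde]
  apply mul_pos
  · exact Finset.prod_pos fun j _ => pow_pos two_pos _
  apply mul_pos
  · exact Finset.prod_pos fun i _ => Real.sin_pos_of_pos_of_lt_pi (h0 i) (hπ i)
  · refine Finset.prod_pos fun i _ => Finset.prod_pos fun j hj => ?_
    rw [Finset.mem_Ioi] at hj
    have := Real.cos_lt_cos_of_nonneg_of_le_pi (h0 j).le (hπ i).le (hm i j hj)
    linarith

lemma det_pos_of_mu {k ℓ : ℕ} (hk : 0 < k) (hl : 0 < ℓ) (μ : Fin k → ℝ)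
    (hpos : ∀ i, 0 < μ i) (hmono' : ∀ i j : Fin k, i < j → μ j < μ i)
    (htop : 2 * μ ⟨0, hk⟩ < (ℓ : ℝ)) :
    0 < (Matrix.of fun i j : Fin k =>
        Real.sin ((((j:ℕ):ℝ) + 1) * (2 * μ i * Real.pi / ℓ))).det := by
  have hlr : (0:ℝ) < ℓ := by exact_mod_cast hl
  have hπ := Real.pi_pos
  apply det_sin_pos
  · intro i
    have := hpos i
    positivity
  · intro i
    have hle : μ i ≤ μ ⟨0, hk⟩ := by
      have h0i : (⟨0, hk⟩ : Fin k) ≤ i := by simp [Fin.le_def]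
      rcases h0i.lt_or_eq with h | h
      · exact (hmono' _ _ h).le
      · rw [← h]
    rw [div_lt_iff₀ hlr]
    nlinarith
  · intro i j hij
    have := hmono' i j hij
    have h2 : 2 * μ j * Real.pi < 2 * μ i * Real.pi := by nlinarith
    exact (div_lt_div_iff_of_pos_right hlr).mpr h2
open Complex in
lemma sum_eq (k ℓ : ℕ) (μ : Fin k → ℝ) :
    (∑ σ : Equiv.Perm (Fin k), ∑ s : Fin k → Bool, (epsSign σ s : ℂ) *
        Complex.exp ((form μ (wAct σ s (delta k)) : ℂ) * Real.pi * Complex.I / ℓ))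
    = (2 * Complex.I)^k * ((Equiv.Perm.sign (Fin.revPerm : Equiv.Perm (Fin k)) : ℤ) : ℂ)
        * (((Matrix.of fun i j : Fin k =>
            Real.sin ((((j:ℕ):ℝ) + 1) * (2 * μ i * Real.pi / ℓ))).det : ℝ) : ℂ) := by
  set θ : Fin k → ℝ := fun i => 2 * μ i * Real.pi / ℓ with hθ
  -- the real matrices
  set M : Matrix (Fin k) (Fin k) ℝ :=
    Matrix.of fun i j : Fin k => Real.sin ((((j:ℕ):ℝ) + 1) * θ i) with hM
  set N : Matrix (Fin k) (Fin k) ℝ :=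
    Matrix.of fun i j : Fin k => Real.sin (delta k j * θ i) with hN
  -- Step A : each summand
  have hsummand : ∀ (σ : Equiv.Perm (Fin k)) (s : Fin k → Bool),
      (epsSign σ s : ℂ) * Complex.exp ((form μ (wAct σ s (delta k)) : ℂ) * Real.pi * I / ℓ)
      = ((Equiv.Perm.sign σ : ℤ) : ℂ) * ∏ i : Fin k,
          ((if s i then (1:ℂ) else -1) *
            Complex.exp ((if s i then (1:ℂ) else -1) * ((delta k (σ.symm i) * θ i : ℝ) : ℂ) * I)) := by
    intro σ s
    have harg : ((form μ (wAct σ s (delta k)) : ℝ) : ℂ) * Real.pi * I / ℓ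
        = ∑ i : Fin k, (if s i then (1:ℂ) else -1) * ((delta k (σ.symm i) * θ i : ℝ) : ℂ) * I := by
      rw [form]
      push_cast
      rw [Finset.mul_sum, Finset.sum_mul, Finset.sum_mul, Finset.sum_div]
      refine Finset.sum_congr rfl fun i _ => ?_
      simp only [wAct, sgnEntry, hθ]
      rcases s i with _ | _ <;> simp <;> push_cast <;> ring
    rw [harg, Complex.exp_sum, epsSign]
    push_cast [apply_ite (fun z : ℤ => (z : ℂ))]
    rw [Finset.prod_mul_distrib]
    ring
  have hbool : ∀ a : ℝ, (∑ b : Bool, ((if b then (1:ℂ) else -1) *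
      Complex.exp ((if b then (1:ℂ) else -1) * ((a : ℝ) : ℂ) * I))) = 2 * I * ((Real.sin a : ℝ) : ℂ) := by
    intro a
    rw [Fintype.sum_bool]
    simp only [if_true, Bool.false_eq_true, if_false]
    rw [Complex.ofReal_sin]
    rw [show (1:ℂ) * (a:ℂ) * I = (a:ℂ) * I by ring,
      show (-1:ℂ) * (a:ℂ) * I = (-(a:ℂ)) * I by ring,
      Complex.exp_mul_I, Complex.exp_mul_I, Complex.cos_neg, Complex.sin_neg]
    ring
  have hrev : ∀ j : Fin k, delta k j = ((Fin.rev j : ℕ) : ℝ) + 1 := by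
    intro j
    have h1 : (Fin.rev j : ℕ) = k - (j + 1) := rfl
    have h2 : ((j : ℕ) + 1) ≤ k := j.isLt
    rw [delta, h1, Nat.cast_sub h2]
    push_cast
    ring
  have hNM : N = M.submatrix id Fin.revPerm := by
    ext i j
    simp only [hN, hM, Matrix.submatrix_apply, Matrix.of_apply, id_eq]
    rw [hrev j]
    rfl
  calc (∑ σ : Equiv.Perm (Fin k), ∑ s : Fin k → Bool, (epsSign σ s : ℂ) *
        Complex.exp ((form μ (wAct σ s (delta k)) : ℂ) * Real.pi * I / ℓ))
      = ∑ σ : Equiv.Perm (Fin k), ((Equiv.Perm.sign σ : ℤ) : ℂ) *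
          ∏ i : Fin k, (2 * I * ((Real.sin (delta k (σ.symm i) * θ i) : ℝ) : ℂ)) := by
        refine Finset.sum_congr rfl fun σ _ => ?_
        simp only [hsummand σ]
        rw [← Finset.mul_sum]
        congr 1
        rw [← Fintype.prod_sum (fun (i : Fin k) (b : Bool) => ((if b then (1:ℂ) else -1) *
          Complex.exp ((if b then (1:ℂ) else -1) * ((delta k (σ.symm i) * θ i : ℝ) : ℂ) * I)))]
        exact Finset.prod_congr rfl fun i _ => hbool _
    _ = (2 * I)^k * ∑ σ : Equiv.Perm (Fin k), ((Equiv.Perm.sign σ : ℤ) : ℂ) *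
          ∏ i : Fin k, ((N.map (Complex.ofRealHom)) (σ i) i) := by
        rw [Finset.mul_sum]
        refine Finset.sum_congr rfl fun σ _ => ?_
        rw [Finset.prod_mul_distrib, Finset.prod_const, Finset.card_univ, Fintype.card_fin]
        have h2 : (∏ i : Fin k, (N.map (Complex.ofRealHom)) (σ i) i)
            = ∏ i : Fin k, ((Real.sin (delta k (σ.symm i) * θ i) : ℝ) : ℂ) := by
          have h3 := Equiv.prod_comp σ (fun i => (N.map (Complex.ofRealHom)) i (σ.symm i))
          simp only [Equiv.symm_apply_apply] at h3
          rw [h3]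
          exact Finset.prod_congr rfl fun i _ => rfl
        rw [h2]
        ring
    _ = (2 * I)^k * (N.map (Complex.ofRealHom)).det := by
        rw [Matrix.det_apply']
    _ = (2 * I)^k * ((N.det : ℝ) : ℂ) := by
        rw [show N.map ⇑Complex.ofRealHom = Complex.ofRealHom.mapMatrix N from
          (RingHom.mapMatrix_apply _ _).symm, ← RingHom.map_det]
        rfl
    _ = (2 * I)^k * ((Equiv.Perm.sign (Fin.revPerm : Equiv.Perm (Fin k)) : ℤ) : ℂ) * ((M.det : ℝ) : ℂ) := by
        rw [hNM, Matrix.det_permute']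
        push_cast
        ring

/-- For `k ≥ 1`, `ℓ > 2k` and `λ ∈ C_ℓ`, the character value
`dim^{Λ_k}_F(V_λ)` at `q = e^{πi/ℓ}`, i.e. the quotient of the alternating sums
`∑_w ε(w) exp(⟨λ+ρ, w(δ)⟩πi/ℓ)` and `∑_w ε(w) exp(⟨ρ, w(δ)⟩πi/ℓ)`, is a strictly
positive real number (in particular the denominator is nonzero). -/
theorem dim_Lambda_k_positive (k ℓ : ℕ) (hk : 0 < k) (hℓ : 2 * k < ℓ)
    (lam : Fin k → ℝ)
    (hint : (∀ i, ∃ n : ℤ, lam i = (n : ℝ)) ∨ (∀ i, ∃ n : ℤ, lam i = (n : ℝ) + 1 / 2))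
    (hmono : ∀ i j : Fin k, i ≤ j → lam j ≤ lam i)
    (hnonneg : ∀ i, 0 ≤ lam i)
    (halcove : 2 * lam ⟨0, hk⟩ + 2 * (k : ℝ) - 1 < (ℓ : ℝ)) :
    (∑ σ : Equiv.Perm (Fin k), ∑ s : Fin k → Bool, (epsSign σ s : ℂ) *
        Complex.exp ((form (rho k) (wAct σ s (delta k)) : ℂ) * Real.pi * Complex.I / ℓ)) ≠ 0 ∧
      ∃ r : ℝ, 0 < r ∧
        (∑ σ : Equiv.Perm (Fin k), ∑ s : Fin k → Bool, (epsSign σ s : ℂ) *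
            Complex.exp ((form (fun i => lam i + rho k i) (wAct σ s (delta k)) : ℂ) *
              Real.pi * Complex.I / ℓ)) /
          (∑ σ : Equiv.Perm (Fin k), ∑ s : Fin k → Bool, (epsSign σ s : ℂ) *
            Complex.exp ((form (rho k) (wAct σ s (delta k)) : ℂ) * Real.pi * Complex.I / ℓ))
          = (r : ℂ) := by
  have hl : 0 < ℓ := by omega
  have hπ := Real.pi_pos
  have hcastk : ∀ i : Fin k, ((i:ℕ):ℝ) + 1 ≤ (k:ℝ) := by
    intro i
    exact_mod_cast i.isLt
  have hrho_pos : ∀ i, 0 < rho k i := by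
    intro i
    have := hcastk i
    simp only [rho]
    linarith
  have hrho_mono : ∀ i j : Fin k, i < j → rho k j < rho k i := by
    intro i j hij
    have : ((i:ℕ):ℝ) < ((j:ℕ):ℝ) := by exact_mod_cast hij
    simp only [rho]
    linarith
  have hrho0 : rho k ⟨0, hk⟩ = (k:ℝ) - 1/2 := by simp [rho]
  -- numerator weight
  have hpos1 : ∀ i, 0 < (fun i => lam i + rho k i) i := fun i => by
    have := hnonneg i; have := hrho_pos i; dsimp; linarith
  have hmono1 : ∀ i j : Fin k, i < j →
      (fun i => lam i + rho k i) j < (fun i => lam i + rho k i) i := by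
    intro i j hij
    have h1 := hmono i j hij.le
    have h2 := hrho_mono i j hij
    dsimp
    linarith
  have htop1 : 2 * (fun i => lam i + rho k i) ⟨0, hk⟩ < (ℓ : ℝ) := by
    dsimp
    rw [hrho0]
    linarith
  have htop0 : 2 * rho k ⟨0, hk⟩ < (ℓ : ℝ) := by
    have : (2 * k : ℝ) < ℓ := by exact_mod_cast hℓ
    rw [hrho0]
    linarith
  have d1pos := det_pos_of_mu hk hl (fun i => lam i + rho k i) hpos1 hmono1 htop1
  have d0pos := det_pos_of_mu hk hl (rho k) hrho_pos hrho_mono htop0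
  have hs1 := sum_eq k ℓ (fun i => lam i + rho k i)
  have hs0 := sum_eq k ℓ (rho k)
  have hC : ((2 * Complex.I)^k *
      ((Equiv.Perm.sign (Fin.revPerm : Equiv.Perm (Fin k)) : ℤ) : ℂ)) ≠ 0 := by
    apply mul_ne_zero
    · exact pow_ne_zero _ (mul_ne_zero two_ne_zero Complex.I_ne_zero)
    · exact Int.cast_ne_zero.mpr (Units.ne_zero _)
  constructor
  · rw [hs0]
    exact mul_ne_zero hC (Complex.ofReal_ne_zero.mpr d0pos.ne')
  · refine ⟨_ / _, div_pos d1pos d0pos, ?_⟩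
    rw [hs1, hs0, Complex.ofReal_div]
    exact mul_div_mul_left _ _ hC

end
end

section
/- Let k ≥ 1 and ℓ ≥ 1 be integers and let q be a nonzero complex number with q^{2ℓ} = 1. Let λ ∈ (1/2)ℤ^k, and let μ ∈ (ℤ + 1/2)^k (so that μ + ρ ∈ ℤ^k); set T := Σ_{i=1}^k (μ+ρ)_i ∈ ℤ. Then Σ_{w∈W} ε(w)·q^{⟨φ(λ)+ρ, w(μ+ρ)⟩} = (−1)^{k(k+1)/2}·(q^ℓ)^T · Σ_{w∈W} ε(w)·q^{⟨λ+ρ, w(μ+ρ)⟩}. In particular the involution φ preserves each character value dim^μ_F up to a sign. -/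
open scoped BigOperators

noncomputable section

/-- The involution `φ(λ) = γ - w₁(λ)` where `γ = ((ℓ-2k)/2, …, (ℓ-2k)/2)` and `w₁`
is the coordinate reversal. -/
def phiMap (k : ℕ) (ℓ : ℤ) (lam : Fin k → ℝ) : Fin k → ℝ :=
  fun i => ((ℓ : ℝ) - 2 * k) / 2 - lam i.rev

lemma revPerm_succ_eq (n : ℕ) :
    (Fin.revPerm : Equiv.Perm (Fin (n+1))) =
      Equiv.Perm.decomposeFin.symm (Fin.last n, Fin.revPerm * finRotate n) := by
  ext i
  refine Fin.cases ?_ (fun x => ?_) i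
  · simp [Fin.rev_zero]
  · rw [Equiv.Perm.decomposeFin_symm_apply_succ]
    cases n with
    | zero => exact x.elim0
    | succ m =>
      by_cases hx : x = Fin.last m
      · subst hx
        simp [finRotate_last, Fin.rev_zero, Fin.succ_last, Fin.rev_last]
      · have h1 : ((finRotate (m+1)) x : ℕ) = x + 1 := by
          rw [coe_finRotate, if_neg hx]
        have hxm : (x : ℕ) < m := by
          have := Fin.val_lt_last hx; omega
        have h2 : (((Fin.revPerm * finRotate (m+1) : Equiv.Perm (Fin (m+1)))) x : ℕ)
            = m - (x + 1) := by
          show ((Fin.rev (finRotate (m+1) x)) : ℕ) = _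
          rw [Fin.val_rev, h1]; omega
        have h3 : ((((Fin.revPerm * finRotate (m+1) : Equiv.Perm (Fin (m+1)))) x).succ : ℕ)
            = m - x := by
          rw [Fin.val_succ, h2]; omega
        rw [Equiv.swap_apply_of_ne_of_ne]
        · rw [h3]
          show ((Fin.rev x.succ) : ℕ) = _
          rw [Fin.val_rev, Fin.val_succ]; omega
        · intro h; apply_fun (Fin.val) at h; rw [h3] at h; simp at h; omega
        · intro h; apply_fun (Fin.val) at h; rw [h3, Fin.val_last] at h; omega

lemma sign_revPerm' (n : ℕ) :
    Equiv.Perm.sign (Fin.revPerm : Equiv.Perm (Fin n)) = (-1) ^ (n * (n-1) / 2) := by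
  induction n with
  | zero =>
    have : (Fin.revPerm : Equiv.Perm (Fin 0)) = 1 := Subsingleton.elim _ _
    simp [this]
  | succ m ih =>
    rw [revPerm_succ_eq, Equiv.Perm.decomposeFin.symm_sign, map_mul, ih]
    cases m with
    | zero => simp
    | succ p =>
      rw [sign_finRotate, if_neg (by simp [Fin.ext_iff])]
      simp only [Nat.add_sub_cancel]
      have key : (p+2) * (p+1) / 2 = 1 + (p+1)*p/2 + p := by
        have h2 : (p+2)*(p+1) = (p+1)*p + 2*(p+1) := by ring
        omega
      rw [key, pow_add, pow_add, pow_one, mul_assoc]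

lemma tri_succ (k : ℕ) : k*(k+1)/2 = k*(k-1)/2 + k := by
  have h : k*(k+1) = k*(k-1) + 2*k := by
    cases k with
    | zero => rfl
    | succ p => simp [Nat.succ_sub_one]; ring
  omega

def Ssum {k : ℕ} (m : Fin k → ℤ) (σ : Equiv.Perm (Fin k)) (s : Fin k → Bool) : ℤ :=
  ∑ i, (if s i then (1:ℤ) else -1) * m (σ.symm i)

/-- For `q ≠ 0` with `q^{2ℓ} = 1`, `λ ∈ (1/2)ℤ^k` and `μ ∈ (ℤ + 1/2)^k` (so that the
exponents `⟨φ(λ)+ρ, w(μ+ρ)⟩`, `⟨λ+ρ, w(μ+ρ)⟩` and `T = ∑ᵢ (μ+ρ)ᵢ` are integers),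
one has `∑_w ε(w) q^{⟨φ(λ)+ρ, w(μ+ρ)⟩} = (-1)^{k(k+1)/2} (q^ℓ)^T ∑_w ε(w) q^{⟨λ+ρ, w(μ+ρ)⟩}`:
the involution `φ` preserves each character value `dim^μ_F` up to sign. -/
theorem phi_preserves_characters (k : ℕ) (hk : 0 < k) (ℓ : ℤ) (hℓ : 1 ≤ ℓ)
    (q : ℂ) (hq : q ≠ 0) (hql : q ^ (2 * ℓ) = 1)
    (lam mu : Fin k → ℝ)
    (hlam : ∀ i, ∃ n : ℤ, lam i = (n : ℝ) / 2)
    (hmu : ∀ i, ∃ n : ℤ, mu i = (n : ℝ) + 1 / 2)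
    (T : ℤ) (hT : (T : ℝ) = ∑ i, (mu i + rho k i))
    (E₁ E₂ : Equiv.Perm (Fin k) → (Fin k → Bool) → ℤ)
    (hE₁ : ∀ σ s, ((E₁ σ s : ℝ)) =
      form (fun i => phiMap k ℓ lam i + rho k i) (wAct σ s (fun i => mu i + rho k i)))
    (hE₂ : ∀ σ s, ((E₂ σ s : ℝ)) =
      form (fun i => lam i + rho k i) (wAct σ s (fun i => mu i + rho k i))) :
    ∑ σ : Equiv.Perm (Fin k), ∑ s : Fin k → Bool, (epsSign σ s : ℂ) * q ^ (E₁ σ s)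
      = (-1 : ℂ) ^ (k * (k + 1) / 2) * (q ^ ℓ) ^ T *
          ∑ σ : Equiv.Perm (Fin k), ∑ s : Fin k → Bool, (epsSign σ s : ℂ) * q ^ (E₂ σ s) := by
  classical
  choose n hn using hmu
  set m : Fin k → ℤ := fun i => n i + k - i with hmdef
  have hmx : ∀ i, ((m i : ℝ)) = mu i + rho k i := by
    intro i
    rw [hmdef, hn i]
    simp only [rho]
    push_cast
    ring
  have hrev : ∀ i : Fin k, ((Fin.rev i : Fin k) : ℝ) = (k : ℝ) - 1 - (i : ℝ) := by
    intro i
    have h := i.is_lt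
    have : ((Fin.rev i : Fin k) : ℕ) = k - (i + 1) := Fin.val_rev i
    rw [this]
    push_cast [Nat.cast_sub (by omega : (i:ℕ) + 1 ≤ k)]
    ring
  have hTm : T = ∑ i, m i := by
    have : ((T:ℝ)) = ((∑ i, m i : ℤ) : ℝ) := by
      push_cast
      rw [hT]
      exact Finset.sum_congr rfl fun i _ => (hmx i).symm
    exact_mod_cast this
  -- key exponent identity
  have hE : ∀ σ s, E₁ σ s
      = ℓ * Ssum m σ s + E₂ (Fin.revPerm * σ) (fun i => ! s (Fin.rev i)) := by
    intro σ s
    have hcast : ((ℓ * Ssum m σ s + E₂ (Fin.revPerm * σ) (fun i => ! s (Fin.rev i)) : ℤ) : ℝ)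
        = (ℓ:ℝ) * ∑ i, (if s i then (1:ℝ) else -1) * (mu (σ.symm i) + rho k (σ.symm i))
          + ((E₂ (Fin.revPerm * σ) (fun i => ! s (Fin.rev i)) : ℤ) : ℝ) := by
      push_cast [Ssum]
      congr 2
      refine Finset.sum_congr rfl fun i _ => ?_
      rw [hmx (σ.symm i)]
      try split <;> ring
      try ring
    apply (Int.cast_injective (α := ℝ))
    rw [hcast, hE₁, hE₂]
    simp only [form, wAct, sgnEntry, phiMap]
    have hsymm : ∀ i, (Fin.revPerm * σ).symm i = σ.symm (Fin.rev i) := fun i => rfl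
    simp only [hsymm]
    -- reindex the second sum on the RHS by i ↦ rev i
    rw [show (∑ i, (lam i + rho k i) *
          ((if (! s (Fin.rev i)) then (1:ℝ) else -1) * (mu (σ.symm (Fin.rev i)) + rho k (σ.symm (Fin.rev i)))))
        = ∑ i, (lam (Fin.rev i) + rho k (Fin.rev i)) *
          ((if (! s i) then (1:ℝ) else -1) * (mu (σ.symm i) + rho k (σ.symm i))) from by
      rw [← Equiv.sum_comp Fin.revPerm (fun j => (lam (Fin.rev j) + rho k (Fin.rev j)) *
          ((if (! s j) then (1:ℝ) else -1) * (mu (σ.symm j) + rho k (σ.symm j))))]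
      simp [Fin.rev_rev]]
    rw [Finset.mul_sum, Finset.mul_sum, Finset.mul_sum, ← Finset.sum_add_distrib]
    refine Finset.sum_congr rfl fun i _ => ?_
    simp only [rho, hrev i]
    cases hsi : s i <;> simp [hsi] <;> ring
  -- sign identity
  have hEps : ∀ (σ : Equiv.Perm (Fin k)) (s : Fin k → Bool),
      epsSign (Fin.revPerm * σ) (fun i => ! s (Fin.rev i))
        = (-1:ℤ)^(k*(k+1)/2) * epsSign σ s := by
    intro σ s
    unfold epsSign
    have hs : ((Equiv.Perm.sign (Fin.revPerm * σ) : ℤ))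
        = (-1:ℤ)^(k*(k-1)/2) * (Equiv.Perm.sign σ : ℤ) := by
      rw [map_mul, sign_revPerm']
      push_cast
      ring
    have hprod : (∏ i, (if (! s (Fin.rev i)) then (1:ℤ) else -1))
        = (-1:ℤ)^k * ∏ i, (if s i then (1:ℤ) else -1) := by
      rw [show (∏ i, (if (! s (Fin.rev i)) then (1:ℤ) else -1))
          = ∏ i, (if (! s i) then (1:ℤ) else -1) from
        Equiv.prod_comp Fin.revPerm (fun j => if (! s j) then (1:ℤ) else -1)]
      rw [show (∏ i, (if (! s i) then (1:ℤ) else -1))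
          = ∏ i, ((-1) * (if s i then (1:ℤ) else -1)) from
        Finset.prod_congr rfl fun i _ => by cases hsi : s i <;> simp [hsi]]
      rw [Finset.prod_mul_distrib, Finset.prod_const]
      simp
    rw [hs, hprod, tri_succ k, pow_add]
    ring
  -- q-power identity
  have hqS : ∀ σ s, q ^ (ℓ * Ssum m σ s) = (q ^ ℓ) ^ T := by
    intro σ s
    have hpar : 2 ∣ Ssum m σ s - T := by
      rw [hTm, show (∑ i, m i) = ∑ i, m (σ.symm i) from (Equiv.sum_comp σ.symm m).symm]
      unfold Ssum
      rw [← Finset.sum_sub_distrib]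
      refine Finset.dvd_sum fun i _ => ?_
      cases hsi : s i
      · simp only [hsi, Bool.false_eq_true, if_false]
        exact ⟨-(m (σ.symm i)), by ring⟩
      · simp [hsi]
    obtain ⟨d, hd⟩ := hpar
    have hS : ℓ * Ssum m σ s = ℓ * T + (2*ℓ) * d := by
      have : Ssum m σ s = T + 2*d := by omega
      rw [this]; ring
    rw [hS, zpow_add₀ hq, zpow_mul q (2*ℓ) d, hql, one_zpow, mul_one, zpow_mul]
  -- square of the sign
  have hsq : ((-1:ℂ))^(k*(k+1)/2) * ((-1:ℂ))^(k*(k+1)/2) = 1 := by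
    rw [← pow_add, ← two_mul, pow_mul]
    norm_num
  -- reindexing of the double sum
  have eB : Function.Involutive (fun (s : Fin k → Bool) => fun i => ! s (Fin.rev i)) := by
    intro s; funext i; simp
  have hre : ∀ (F : Equiv.Perm (Fin k) → (Fin k → Bool) → ℂ),
      (∑ σ : Equiv.Perm (Fin k), ∑ s : Fin k → Bool,
          F (Fin.revPerm * σ) (fun i => ! s (Fin.rev i)))
        = ∑ σ : Equiv.Perm (Fin k), ∑ s : Fin k → Bool, F σ s := by
    intro F
    rw [← Equiv.sum_comp (Equiv.mulLeft Fin.revPerm) (fun σ => ∑ s, F σ s)]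
    refine Finset.sum_congr rfl fun σ _ => ?_
    exact Equiv.sum_comp (eB.toPerm _) (fun s => F (Equiv.mulLeft Fin.revPerm σ) s)
  calc ∑ σ : Equiv.Perm (Fin k), ∑ s : Fin k → Bool, (epsSign σ s : ℂ) * q ^ (E₁ σ s)
      = ∑ σ : Equiv.Perm (Fin k), ∑ s : Fin k → Bool,
          ((-1:ℂ)^(k*(k+1)/2) * (q ^ ℓ) ^ T *
            ((epsSign (Fin.revPerm * σ) (fun i => ! s (Fin.rev i)) : ℂ)
              * q ^ (E₂ (Fin.revPerm * σ) (fun i => ! s (Fin.rev i))))) := by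
        refine Finset.sum_congr rfl fun σ _ => Finset.sum_congr rfl fun s _ => ?_
        rw [hE σ s, zpow_add₀ hq, hqS σ s, hEps σ s]
        push_cast
        linear_combination -((epsSign σ s : ℂ) *
          ((q ^ ℓ) ^ T * q ^ (E₂ (Fin.revPerm * σ) (fun i => ! s (Fin.rev i))))) * hsq
    _ = (-1 : ℂ) ^ (k * (k + 1) / 2) * (q ^ ℓ) ^ T *
          ∑ σ : Equiv.Perm (Fin k), ∑ s : Fin k → Bool, (epsSign σ s : ℂ) * q ^ (E₂ σ s) := by
        rw [← hre (fun σ s => (epsSign σ s : ℂ) * q ^ (E₂ σ s)), Finset.mul_sum]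
        refine Finset.sum_congr rfl fun σ _ => ?_
        rw [Finset.mul_sum]


end
end

section
/- Let k ≥ 1 and ℓ ≥ 1 be integers and let q be a nonzero complex number with q^{2ℓ} = 1. For x ∈ ℝ^k define the affine reflection t_ℓ(x) := x + (ℓ − 2x₁)·e₁, where e₁ = (1,0,…,0). Then for every x ∈ (1/2)ℤ^k and every ν ∈ ℤ^k, Σ_{w∈W} ε(w)·q^{⟨w(t_ℓ(x)), ν⟩} = − Σ_{w∈W} ε(w)·q^{⟨w(x), ν⟩}. [This is the antisymmetry of character numerators under the affine reflection t_ℓ, with x = κ+ρ; it shows the q-characters specialize to characters of Gr(F).] -/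
open scoped BigOperators

noncomputable section

/-- The affine reflection `t_ℓ(x) = x + (ℓ - 2x₁)·e₁`. -/
def tRefl (k : ℕ) (hk : 0 < k) (ℓ : ℤ) (x : Fin k → ℝ) : Fin k → ℝ :=
  fun i => x i + (if i = ⟨0, hk⟩ then (ℓ : ℝ) - 2 * x ⟨0, hk⟩ else 0)

lemma flip_involutive {k : ℕ} (j : Fin k) :
    Function.Involutive (fun s : Fin k → Bool => Function.update s j (!(s j))) := by
  intro s
  funext i
  by_cases h : i = j
  · subst h; simp
  · simp [Function.update_of_ne h]

lemma epsSign_flip {k : ℕ} (σ : Equiv.Perm (Fin k)) (s : Fin k → Bool) (j : Fin k) :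
    epsSign σ (Function.update s j (!(s j))) = - epsSign σ s := by
  unfold epsSign
  have h1 : (fun i => if Function.update s j (!(s j)) i then (1 : ℤ) else -1)
      = Function.update (fun i => if s i then (1 : ℤ) else -1) j
          (if !(s j) then (1 : ℤ) else -1) := by
    funext i
    by_cases h : i = j
    · subst h; simp
    · simp [Function.update_of_ne h]
  rw [h1, Finset.prod_update_of_mem (Finset.mem_univ j),
    ← Finset.mul_prod_erase Finset.univ _ (Finset.mem_univ j)]
  cases hs : s j <;> simp [hs, Finset.sdiff_singleton_eq_erase] <;> ring

/-- For `q ≠ 0` with `q^{2ℓ} = 1`, `x ∈ (1/2)ℤ^k` and `ν ∈ ℤ^k` (so that all exponents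
`⟨w(t_ℓ(x)), ν⟩` and `⟨w(x), ν⟩` are integers),
`∑_w ε(w) q^{⟨w(t_ℓ(x)), ν⟩} = - ∑_w ε(w) q^{⟨w(x), ν⟩}`: the character numerators are
antisymmetric under the affine reflection `t_ℓ`. -/
theorem affine_reflection_antisymmetry (k : ℕ) (hk : 0 < k) (ℓ : ℤ) (hℓ : 1 ≤ ℓ)
    (q : ℂ) (hq : q ≠ 0) (hql : q ^ (2 * ℓ) = 1)
    (x ν : Fin k → ℝ)
    (hx : ∀ i, ∃ n : ℤ, x i = (n : ℝ) / 2)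
    (hν : ∀ i, ∃ n : ℤ, ν i = (n : ℝ))
    (E₁ E₂ : Equiv.Perm (Fin k) → (Fin k → Bool) → ℤ)
    (hE₁ : ∀ σ s, ((E₁ σ s : ℝ)) = form (wAct σ s (tRefl k hk ℓ x)) ν)
    (hE₂ : ∀ σ s, ((E₂ σ s : ℝ)) = form (wAct σ s x) ν) :
    ∑ σ : Equiv.Perm (Fin k), ∑ s : Fin k → Bool, (epsSign σ s : ℂ) * q ^ (E₁ σ s)
      = - ∑ σ : Equiv.Perm (Fin k), ∑ s : Fin k → Bool, (epsSign σ s : ℂ) * q ^ (E₂ σ s) := by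
  have main : ∀ σ : Equiv.Perm (Fin k),
      ∑ s : Fin k → Bool, (epsSign σ s : ℂ) * q ^ (E₁ σ s)
        = - ∑ s : Fin k → Bool, (epsSign σ s : ℂ) * q ^ (E₂ σ s) := by
    intro σ
    set j : Fin k := σ ⟨0, hk⟩ with hjdef
    obtain ⟨nj, hnj⟩ := hν j
    have hsymm : σ.symm j = ⟨0, hk⟩ := by simp [hjdef]
    have key : ∀ s : Fin k → Bool,
        (epsSign σ s : ℂ) * q ^ (E₁ σ s)
          = - ((epsSign σ (Function.update s j (!(s j))) : ℂ)
              * q ^ (E₂ σ (Function.update s j (!(s j))))) := by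
      intro s
      set s' : Fin k → Bool := Function.update s j (!(s j)) with hs'def
      set m : ℤ := if s j then nj else -nj with hmdef
      -- exponent relation
      have hpt : ∀ i, wAct σ s (tRefl k hk ℓ x) i * ν i
          = wAct σ s' x i * ν i + (if i = j then sgnEntry s j * (ℓ : ℝ) * ν j else 0) := by
        intro i
        by_cases h : i = j
        · subst h
          have hs'j : sgnEntry s' j = - sgnEntry s j := by
            cases hs : s j <;> simp [sgnEntry, hs'def, hs]
          simp only [wAct, tRefl, hsymm, hs'j, eq_self_iff_true, if_true]
          ring
        · have h0 : σ.symm i ≠ ⟨0, hk⟩ := by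
            intro hcon
            apply h
            have := congrArg σ hcon
            simpa [hjdef] using this
          have hs'i : s' i = s i := Function.update_of_ne h _ _
          simp only [wAct, tRefl, if_neg h0, if_neg h, sgnEntry, hs'i, add_zero]
      have hsum : (E₁ σ s : ℝ) = (E₂ σ s' : ℝ) + 2 * (sgnEntry s j * (ℓ : ℝ) * ν j) := by
        rw [hE₁, hE₂]
        unfold form
        rw [Finset.sum_congr rfl (fun i _ => hpt i), Finset.sum_add_distrib,
          Finset.sum_ite_eq' Finset.univ j]
        simp
        ring
      have hint : E₁ σ s = E₂ σ s' + 2 * ℓ * m := by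
        have : (E₁ σ s : ℝ) = ((E₂ σ s' + 2 * ℓ * m : ℤ) : ℝ) := by
          rw [hsum, hnj]
          cases hs : s j <;> simp [sgnEntry, hs, hmdef] <;> push_cast <;> ring
        exact_mod_cast this
      have hq2 : q ^ (E₁ σ s) = q ^ (E₂ σ s') := by
        rw [hint, zpow_add₀ hq, zpow_mul, hql, one_zpow, mul_one]
      have heps : (epsSign σ s' : ℂ) = - (epsSign σ s : ℂ) := by
        rw [hs'def, epsSign_flip]; push_cast; ring
      rw [hq2, heps]
      ring
    have hinv := flip_involutive (k := k) j
    calc ∑ s : Fin k → Bool, (epsSign σ s : ℂ) * q ^ (E₁ σ s)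
        = ∑ s : Fin k → Bool, - ((epsSign σ s : ℂ) * q ^ (E₂ σ s)) := by
          refine Fintype.sum_equiv hinv.toPerm _ _ ?_
          intro s
          exact key s
      _ = - ∑ s : Fin k → Bool, (epsSign σ s : ℂ) * q ^ (E₂ σ s) := by
          rw [Finset.sum_neg_distrib]
  rw [Finset.sum_congr rfl (fun σ _ => main σ), Finset.sum_neg_distrib]
end
end

section
/- Let k ≥ 2 and ℓ be integers with 2(2k+1) < ℓ. Then for every real z with 1 ≤ z ≤ ℓ−2, 1 − sin(2kzπ/ℓ)/sin(zπ/ℓ) < sin((2k+1)π/ℓ)/sin(π/ℓ). [This is the inequality h(z) < Dim(□) between the value of the quantum-dimension character at q = e^{zπi/ℓ} on the generating object and the positive character, away from z = ℓ−1.] -/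
open Real

/-- `sin (n t) / sin t` is antitone on `(0, π/n]`, in two-point product form. -/
lemma sin_nat_mul_ratio_antitone (n : ℕ) : ∀ a b : ℝ, 0 < a → a ≤ b → (n : ℝ) * b ≤ π →
    Real.sin ((n : ℝ) * b) * Real.sin a ≤ Real.sin ((n : ℝ) * a) * Real.sin b := by
  induction n with
  | zero => intro a b _ _ _; simp
  | succ n ih =>
    intro a b ha hab hb
    rcases Nat.eq_zero_or_pos n with hn | hn
    · subst hn; simp [mul_comm]
    have hn1 : (1 : ℝ) ≤ (n : ℝ) := by exact_mod_cast hn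
    have hb0 : 0 < b := lt_of_lt_of_le ha hab
    push_cast at hb ⊢
    have hbpi2 : b ≤ π / 2 := by nlinarith
    have hnb : (n : ℝ) * b ≤ π := by nlinarith
    have key := ih a b ha hab hnb
    have h1 : 0 ≤ Real.sin ((n : ℝ) * b) :=
      Real.sin_nonneg_of_nonneg_of_le_pi (by positivity) hnb
    have hsa : 0 ≤ Real.sin a :=
      Real.sin_nonneg_of_nonneg_of_le_pi ha.le (by linarith)
    have hsb : 0 ≤ Real.sin b :=
      Real.sin_nonneg_of_nonneg_of_le_pi hb0.le (by linarith)
    have hca : 0 ≤ Real.cos a :=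
      Real.cos_nonneg_of_mem_Icc ⟨by linarith [Real.pi_pos], by linarith⟩
    have hcb : Real.cos b ≤ Real.cos a :=
      Real.cos_le_cos_of_nonneg_of_le_pi ha.le (by linarith [Real.pi_pos]) hab
    have hcnab : Real.cos ((n : ℝ) * b) ≤ Real.cos ((n : ℝ) * a) :=
      Real.cos_le_cos_of_nonneg_of_le_pi (by positivity) hnb
        (by nlinarith)
    have c1 : Real.sin ((n : ℝ) * b) * Real.sin a * Real.cos b ≤
        Real.sin ((n : ℝ) * b) * Real.sin a * Real.cos a :=
      mul_le_mul_of_nonneg_left hcb (mul_nonneg h1 hsa)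
    have c2 : Real.sin ((n : ℝ) * b) * Real.sin a * Real.cos a ≤
        Real.sin ((n : ℝ) * a) * Real.sin b * Real.cos a :=
      mul_le_mul_of_nonneg_right key hca
    have c3 : Real.cos ((n : ℝ) * b) * (Real.sin a * Real.sin b) ≤
        Real.cos ((n : ℝ) * a) * (Real.sin a * Real.sin b) :=
      mul_le_mul_of_nonneg_right hcnab (mul_nonneg hsa hsb)
    rw [show ((n : ℝ) + 1) * a = (n : ℝ) * a + a by ring,
        show ((n : ℝ) + 1) * b = (n : ℝ) * b + b by ring,
        Real.sin_add, Real.sin_add]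
    nlinarith [c1, c2, c3]

set_option maxHeartbeats 1000000 in
lemma main_key (k : ℕ) (hk : 2 ≤ k) (B w : ℝ) (hB : 0 < B) (hB2 : (4 * k + 2) * B < π)
    (hw1 : 2 * B ≤ w) (hw2 : w ≤ π - B) :
    Real.sin B * Real.sin (2 * k * w) <
      Real.sin w * (Real.sin ((2 * k + 1) * B) - Real.sin B) := by
  have hk2 : (2 : ℝ) ≤ (k : ℝ) := by exact_mod_cast hk
  have hpi := Real.pi_pos
  have hBpi : B < π / 10 := by nlinarith
  have hsB : 0 < Real.sin B := Real.sin_pos_of_pos_of_lt_pi hB (by linarith)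
  have hsw : 0 < Real.sin w := Real.sin_pos_of_pos_of_lt_pi (by linarith) (by linarith)
  have hskB : 0 < Real.sin ((k : ℝ) * B) :=
    Real.sin_pos_of_pos_of_lt_pi (by positivity) (by nlinarith)
  -- D > 0
  have hD : Real.sin B < Real.sin ((2 * (k : ℝ) + 1) * B) := by
    apply Real.sin_lt_sin_of_lt_of_le_pi_div_two (by linarith) (by nlinarith) (by nlinarith)
  rcases le_or_gt (Real.sin (2 * (k : ℝ) * w)) 0 with htriv | hpos2
  · nlinarith [mul_pos hsw (sub_pos.mpr hD)]
  rcases le_or_gt (2 * (k : ℝ) * w) π with hC1 | hC1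
  · -- region where sin(2kt)/sin t is antitone
    have h1 := sin_nat_mul_ratio_antitone (2 * k) (2 * B) w (by positivity) hw1
      (by push_cast; linarith)
    push_cast at h1
    -- hcos : cos (3kB) < cos ((k+2)B)
    have hcos : Real.cos (3 * (k : ℝ) * B) < Real.cos (((k : ℝ) + 2) * B) := by
      apply Real.cos_lt_cos_of_nonneg_of_le_pi (by positivity) (by nlinarith) (by nlinarith)
    -- identities
    have j1 : Real.sin ((2 * (k : ℝ) + 2) * B) =
        Real.sin (((k : ℝ) + 2) * B) * Real.cos ((k : ℝ) * B) +
          Real.cos (((k : ℝ) + 2) * B) * Real.sin ((k : ℝ) * B) := by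
      rw [show (2 * (k : ℝ) + 2) * B = ((k : ℝ) + 2) * B + (k : ℝ) * B by ring, Real.sin_add]
    have j2 : Real.sin (2 * B) =
        Real.sin (((k : ℝ) + 2) * B) * Real.cos ((k : ℝ) * B) -
          Real.cos (((k : ℝ) + 2) * B) * Real.sin ((k : ℝ) * B) := by
      rw [show (2 : ℝ) * B = ((k : ℝ) + 2) * B - (k : ℝ) * B by ring, Real.sin_sub]
    have j3 : Real.sin (2 * (k : ℝ) * (2 * B)) =
        Real.sin (3 * (k : ℝ) * B) * Real.cos ((k : ℝ) * B) +
          Real.cos (3 * (k : ℝ) * B) * Real.sin ((k : ℝ) * B) := by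
      rw [show 2 * (k : ℝ) * (2 * B) = 3 * (k : ℝ) * B + (k : ℝ) * B by ring, Real.sin_add]
    have j4 : Real.sin (2 * (k : ℝ) * B) =
        Real.sin (3 * (k : ℝ) * B) * Real.cos ((k : ℝ) * B) -
          Real.cos (3 * (k : ℝ) * B) * Real.sin ((k : ℝ) * B) := by
      rw [show 2 * (k : ℝ) * B = 3 * (k : ℝ) * B - (k : ℝ) * B by ring, Real.sin_sub]
    have j5 : Real.sin ((2 * (k : ℝ) + 2) * B) =
        Real.sin ((2 * (k : ℝ) + 1) * B) * Real.cos B +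
          Real.cos ((2 * (k : ℝ) + 1) * B) * Real.sin B := by
      rw [show (2 * (k : ℝ) + 2) * B = (2 * (k : ℝ) + 1) * B + B by ring, Real.sin_add]
    have j6 : Real.sin (2 * (k : ℝ) * B) =
        Real.sin ((2 * (k : ℝ) + 1) * B) * Real.cos B -
          Real.cos ((2 * (k : ℝ) + 1) * B) * Real.sin B := by
      rw [show 2 * (k : ℝ) * B = (2 * (k : ℝ) + 1) * B - B by ring, Real.sin_sub]
    have j7 : Real.sin (2 * B) = 2 * Real.sin B * Real.cos B := Real.sin_two_mul B
    have hprod : 0 < Real.sin ((k : ℝ) * B) *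
        (Real.cos (((k : ℝ) + 2) * B) - Real.cos (3 * (k : ℝ) * B)) :=
      mul_pos hskB (sub_pos.mpr hcos)
    -- hE : sin (4kB) < 2 cos B * (sin((2k+1)B) - sin B)
    have hprod' : 0 < Real.sin ((k : ℝ) * B) * Real.cos (((k : ℝ) + 2) * B) -
        Real.sin ((k : ℝ) * B) * Real.cos (3 * (k : ℝ) * B) := by nlinarith [hprod]
    have heq : 2 * Real.cos B * (Real.sin ((2 * (k : ℝ) + 1) * B) - Real.sin B) -
        Real.sin (2 * (k : ℝ) * (2 * B)) =
        2 * (Real.sin ((k : ℝ) * B) * Real.cos (((k : ℝ) + 2) * B) -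
          Real.sin ((k : ℝ) * B) * Real.cos (3 * (k : ℝ) * B)) := by
      linear_combination j1 - j2 - j3 + j4 - j5 - j6 + j7
    have hE : Real.sin (2 * (k : ℝ) * (2 * B)) <
        2 * Real.cos B * (Real.sin ((2 * (k : ℝ) + 1) * B) - Real.sin B) := by
      linarith only [heq, hprod']
    -- h2 : sin B * sin (4kB) < sin(2B) * D
    have hs2B : 0 < Real.sin (2 * B) := Real.sin_pos_of_pos_of_lt_pi (by linarith) (by linarith)
    have h2 : Real.sin B * Real.sin (2 * (k : ℝ) * (2 * B)) <
        Real.sin (2 * B) * (Real.sin ((2 * (k : ℝ) + 1) * B) - Real.sin B) := by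
      rw [j7]; linarith only [mul_lt_mul_of_pos_left hE hsB]
    have step1 := mul_le_mul_of_nonneg_left h1 hsB.le
    have step2 := mul_lt_mul_of_pos_left h2 hsw
    have final : Real.sin (2 * B) * (Real.sin B * Real.sin (2 * (k : ℝ) * w)) <
        Real.sin (2 * B) * (Real.sin w *
          (Real.sin ((2 * (k : ℝ) + 1) * B) - Real.sin B)) := by linarith only [step1, step2]
    exact lt_of_mul_lt_mul_left final hs2B.le
  rcases lt_or_ge (π - π / (2 * k)) w with hC3 | hC3
  · -- then sin (2kw) ≤ 0, contradiction
    exfalso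
    have hk0 : (0 : ℝ) < (k : ℝ) := by linarith
    have he : Real.sin (2 * (k : ℝ) * w) = -Real.sin (2 * (k : ℝ) * (π - w)) := by
      have hs0 : Real.sin ((k : ℝ) * (2 * π)) = 0 := by
        rw [show (k : ℝ) * (2 * π) = ((2 * k : ℕ) : ℝ) * π by push_cast; ring]
        exact Real.sin_nat_mul_pi _
      rw [show 2 * (k : ℝ) * w = (k : ℝ) * (2 * π) - 2 * (k : ℝ) * (π - w) by ring,
        Real.sin_sub, Real.cos_nat_mul_two_pi, hs0]
      ring
    have h1' : 0 ≤ Real.sin (2 * (k : ℝ) * (π - w)) := by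
      apply Real.sin_nonneg_of_nonneg_of_le_pi
      · have hpw : (0:ℝ) ≤ π - w := by linarith
        exact mul_nonneg (by positivity) hpw
      · have : π - w < π / (2 * (k : ℝ)) := by linarith
        calc 2 * (k : ℝ) * (π - w) ≤ 2 * (k : ℝ) * (π / (2 * k)) := by nlinarith
          _ = π := by field_simp
    linarith [he ▸ hpos2]
  · -- middle region : sin w ≥ 1/k, D > k B
    have hk0 : (0 : ℝ) < (k : ℝ) := by linarith
    have hwlb : π / (2 * (k : ℝ)) < w := by
      rw [div_lt_iff₀ (by positivity)]; nlinarith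
    have hs_lb : Real.sin (π / (2 * (k : ℝ))) ≤ Real.sin w := by
      have hhalf : π / (2 * (k : ℝ)) ≤ π / 2 := by
        apply div_le_div_of_nonneg_left hpi.le (by norm_num) (by linarith)
      have hx1 : -(π / 2) ≤ π / (2 * (k : ℝ)) :=
        le_trans (by linarith) (by positivity : (0:ℝ) ≤ π / (2 * (k : ℝ)))
      rcases le_or_gt w (π / 2) with hw | hw
      · exact Real.sin_le_sin_of_le_of_le_pi_div_two hx1 hw hwlb.le
      · rw [← Real.sin_pi_sub w]
        exact Real.sin_le_sin_of_le_of_le_pi_div_two hx1 (by linarith) (by linarith)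
    have hj1 : 1 / (k : ℝ) ≤ Real.sin (π / (2 * (k : ℝ))) := by
      have := Real.mul_le_sin (x := π / (2 * (k : ℝ))) (by positivity)
        (div_le_div_of_nonneg_left hpi.le (by norm_num) (by linarith))
      calc 1 / (k : ℝ) = 2 / π * (π / (2 * k)) := by field_simp
        _ ≤ _ := this
    have hj2 : 2 / π * ((2 * (k : ℝ) + 1) * B) ≤ Real.sin ((2 * (k : ℝ) + 1) * B) :=
      Real.mul_le_sin (by positivity) (by linarith)
    have hj2' : 2 * ((2 * (k : ℝ) + 1) * B) ≤ π * Real.sin ((2 * (k : ℝ) + 1) * B) := by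
      rw [div_mul_eq_mul_div, div_le_iff₀ hpi] at hj2; linarith [hj2]
    have hsinBB : Real.sin B < B := Real.sin_lt hB
    have h315 : 3.15 * (((k : ℝ) + 1) * B) ≤ (4 * (k : ℝ) + 2) * B := by
      have hh : (0:ℝ) ≤ (0.85 * (k : ℝ) - 1.15) * B :=
        mul_nonneg (by linarith) hB.le
      linarith only [hh]
    have hpib : π * (((k : ℝ) + 1) * B) < 3.15 * (((k : ℝ) + 1) * B) :=
      mul_lt_mul_of_pos_right Real.pi_lt_d2 (by positivity)
    have hXgt : ((k : ℝ) + 1) * B < Real.sin ((2 * (k : ℝ) + 1) * B) := by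
      have hmul : π * (((k : ℝ) + 1) * B) < π * Real.sin ((2 * (k : ℝ) + 1) * B) := by
        linarith only [hj2', h315, hpib]
      exact lt_of_mul_lt_mul_left hmul hpi.le
    have hD_lb : (k : ℝ) * B < Real.sin ((2 * (k : ℝ) + 1) * B) - Real.sin B := by
      linarith only [hXgt, hsinBB]
    have hswlb : 1 / (k : ℝ) ≤ Real.sin w := le_trans hj1 hs_lb
    have h1k : (0:ℝ) < 1 / (k : ℝ) := by positivity
    have t1 : 1 / (k : ℝ) * ((k : ℝ) * B) < 1 / (k : ℝ) *
        (Real.sin ((2 * (k : ℝ) + 1) * B) - Real.sin B) := by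
      exact mul_lt_mul_of_pos_left hD_lb h1k
    have t2 : 1 / (k : ℝ) * (Real.sin ((2 * (k : ℝ) + 1) * B) - Real.sin B) ≤
        Real.sin w * (Real.sin ((2 * (k : ℝ) + 1) * B) - Real.sin B) :=
      mul_le_mul_of_nonneg_right hswlb (by linarith [hD_lb, mul_pos hk0 hB])
    have teq : 1 / (k : ℝ) * ((k : ℝ) * B) = B := by field_simp
    have hup : Real.sin B * Real.sin (2 * (k : ℝ) * w) ≤ Real.sin B := by
      nlinarith [Real.sin_le_one (2 * (k : ℝ) * w), hsB]
    linarith [t1, t2, teq ▸ t1, hup, hsinBB]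


/-- For integers `k ≥ 2` and `ℓ` with `2(2k+1) < ℓ`, and every real `z` with
`1 ≤ z ≤ ℓ - 2`, the value `h(z) = 1 - sin(2kzπ/ℓ)/sin(zπ/ℓ)` of the quantum-dimension
character on the generating object is strictly less than the positive character value
`Dim(□) = sin((2k+1)π/ℓ)/sin(π/ℓ)`. -/
theorem typeBC_dim_lt_positive_character (k ℓ : ℕ) (hk : 2 ≤ k)
    (hℓ : 2 * (2 * k + 1) < ℓ) (z : ℝ) (hz1 : 1 ≤ z) (hz2 : z ≤ (ℓ : ℝ) - 2) :
    1 - Real.sin (2 * k * z * Real.pi / ℓ) / Real.sin (z * Real.pi / ℓ) <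
      Real.sin ((2 * k + 1) * Real.pi / ℓ) / Real.sin (Real.pi / ℓ) := by
  have hpi := Real.pi_pos
  have hL : (4 * (k : ℝ) + 2) < (ℓ : ℝ) := by exact_mod_cast (by omega : 4 * k + 2 < ℓ)
  have hk2 : (2 : ℝ) ≤ (k : ℝ) := by exact_mod_cast hk
  have hL0 : (0 : ℝ) < (ℓ : ℝ) := by linarith
  set B : ℝ := π / ℓ with hBdef
  set A : ℝ := z * π / ℓ with hAdef
  have hB : 0 < B := by positivity
  have hBL : B * ℓ = π := by rw [hBdef]; field_simp
  have hAL : A * ℓ = z * π := by rw [hAdef]; field_simp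
  have hB2 : (4 * (k : ℝ) + 2) * B < π := by
    rw [← hBL]; nlinarith [mul_lt_mul_of_pos_left hL hB]
  have hA1 : B ≤ A := by
    have hm : B * ℓ ≤ A * ℓ := by rw [hBL, hAL]; nlinarith
    exact le_of_mul_le_mul_right hm hL0
  have hA2 : A ≤ π - 2 * B := by
    have hm : A * ℓ ≤ (π - 2 * B) * ℓ := by
      have : (π - 2 * B) * ℓ = π * ℓ - 2 * π := by
        have h' : (π - 2 * B) * ℓ = π * ℓ - 2 * (B * ℓ) := by ring
        rw [h', hBL]
      rw [hAL, this]; nlinarith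
    exact le_of_mul_le_mul_right hm hL0
  set w : ℝ := π - A with hwdef
  have hw1 : 2 * B ≤ w := by rw [hwdef]; linarith
  have hw2 : w ≤ π - B := by rw [hwdef]; linarith
  have key := main_key k hk B w hB hB2 hw1 hw2
  have hsB : 0 < Real.sin B := Real.sin_pos_of_pos_of_lt_pi hB (by nlinarith)
  have hsw : 0 < Real.sin w := Real.sin_pos_of_pos_of_lt_pi (by nlinarith) (by nlinarith)
  have hsinA : Real.sin A = Real.sin w := by
    rw [show A = π - w by rw [hwdef]; ring, Real.sin_pi_sub]
  have hs0 : Real.sin ((k : ℝ) * (2 * π)) = 0 := by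
    rw [show (k : ℝ) * (2 * π) = ((2 * k : ℕ) : ℝ) * π by push_cast; ring]
    exact Real.sin_nat_mul_pi _
  have hsin2kA : Real.sin (2 * (k : ℝ) * A) = -Real.sin (2 * (k : ℝ) * w) := by
    rw [show 2 * (k : ℝ) * A = (k : ℝ) * (2 * π) - 2 * (k : ℝ) * w by rw [hwdef]; ring,
      Real.sin_sub, Real.cos_nat_mul_two_pi, hs0]
    ring
  have e1 : 2 * (k : ℝ) * z * π / ℓ = 2 * (k : ℝ) * A := by rw [hAdef]; ring
  have e2 : (2 * (k : ℝ) + 1) * π / ℓ = (2 * (k : ℝ) + 1) * B := by rw [hBdef]; ring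
  rw [e1, e2, hsin2kA, hsinA]
  rw [sub_lt_iff_lt_add, div_add_div _ _ hsB.ne' hsw.ne', lt_div_iff₀ (mul_pos hsB hsw)]
  nlinarith [key]
end

section
/- Let k ≥ 2 and ℓ be integers with 2(2k+1) < ℓ. Then for every real z with 1 ≤ z ≤ ℓ−1, sin(2kzπ/ℓ)/sin(zπ/ℓ) − 1 < sin((2k+1)π/ℓ)/sin(π/ℓ). [This is the inequality −h(z) < Dim(□) needed because the categorical dimension is only determined up to sign by the braiding eigenvalues.] -/
/-!
Put `t = π/ℓ`, `y = zπ/ℓ ∈ [t, π - t]` and `M = 2k`; the claim is `sin(My) < ([M+1] + 1) sin y`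
with `[n] = sin(nt)/sin t`. We prove it for `|sin(My)|`, which reduces it to `y ≤ π/2` by the
symmetry `y ↦ π - y`. If `My ≤ π`, the decrease of `sin x / x` on `(0, π]` gives
`sin(My) ≤ [M+1] y`, and `[M+1] ≤ M + 1` together with `y - sin y < y³/6` lets the extra `sin y`
absorb the error `[M+1] (y - sin y)`. If `My > π`, Jordan's inequality gives
`[M+1] sin y ≥ 4(M+1)y/π² > 1`.
-/

open Real

/-- The quantum integer `[n]_q` at `q = e^{it}`; `Dim(□)` is `quantumInt (2k+1) (π/ℓ)`. -/
noncomputable def quantumInt (n t : ℝ) : ℝ := sin (n * t) / sin t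

theorem antitoneOn_sin_div_self : AntitoneOn (fun x => sin x / x) (Set.Ioc 0 π) := by
  intro a ha b hb hab
  rcases hab.eq_or_lt with rfl | hab
  · rfl
  have h := strictConcaveOn_sin_Icc.secant_strict_mono (a := 0) ⟨le_rfl, pi_pos.le⟩
    (Set.Ioc_subset_Icc_self ha) (Set.Ioc_subset_Icc_self hb) ha.1.ne' hb.1.ne' hab
  simpa using h.le

theorem mul_sin_le_mul_sin {a b : ℝ} (ha : 0 < a) (hab : a ≤ b) (hb : b ≤ π) :
    a * sin b ≤ b * sin a := by
  have h := antitoneOn_sin_div_self ⟨ha, hab.trans hb⟩ ⟨ha.trans_le hab, hb⟩ hab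
  rwa [div_le_div_iff₀ (ha.trans_le hab) ha, mul_comm (sin b), mul_comm (sin a)] at h

section

variable {M t y : ℝ}

theorem quantumInt_le (hM : 1 ≤ M) (ht : 0 < t) (hMt : M * t ≤ π) : quantumInt M t ≤ M := by
  have h := mul_sin_le_mul_sin ht (le_mul_of_one_le_left ht.le hM) hMt
  refine div_le_of_le_mul₀ (sin_nonneg_of_nonneg_of_le_pi ht.le (by nlinarith)) (by linarith) ?_
  nlinarith

theorem two_div_pi_mul_le_quantumInt (hM : 1 ≤ M) (ht : 0 < t) (hMt : M * t ≤ π / 2) :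
    2 / π * M ≤ quantumInt M t := by
  have hst : 0 < sin t := sin_pos_of_pos_of_lt_pi ht (by nlinarith [pi_pos])
  rw [quantumInt, le_div_iff₀ hst]
  calc 2 / π * M * sin t ≤ 2 / π * (M * t) := by
        rw [mul_assoc]; gcongr; exact sin_le ht.le
    _ ≤ sin (M * t) := mul_le_sin (by positivity) hMt

theorem mul_sub_sin_lt_sin {c : ℝ} (hy : 0 < y) (h : (c + 1) * y ^ 2 ≤ 6) :
    c * (y - sin y) < sin y := by
  nlinarith [sin_gt_sub_cube hy, sin_le hy.le]

theorem sin_mul_le_quantumInt_mul (hM : 0 < M) (ht : 0 < t) (hty : t ≤ y) (hMy : M * y ≤ π)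
    (hMt : (M + 1) * t ≤ π / 2) : sin (M * y) ≤ quantumInt (M + 1) t * y := by
  have hst : 0 < sin t := sin_pos_of_pos_of_lt_pi ht (by nlinarith [pi_pos])
  have hsinc := mul_sin_le_mul_sin (mul_pos hM ht) (mul_le_mul_of_nonneg_left hty hM.le) hMy
  have hmono : sin (M * t) ≤ sin ((M + 1) * t) :=
    sin_le_sin_of_le_of_le_pi_div_two (by nlinarith [pi_pos]) hMt (by nlinarith)
  rw [quantumInt, div_mul_eq_mul_div, le_div_iff₀ hst]
  calc sin (M * y) * sin t ≤ sin (M * y) * t :=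
        mul_le_mul_of_nonneg_left (sin_le ht.le)
          (sin_nonneg_of_nonneg_of_le_pi (by nlinarith) hMy)
    _ ≤ y * sin (M * t) := by nlinarith
    _ ≤ sin ((M + 1) * t) * y := by nlinarith

theorem sin_mul_lt_quantumInt_add_one_mul_sin (hM : 4 ≤ M) (ht : 0 < t) (hty : t ≤ y)
    (hMy : M * y ≤ π) (hMt : (M + 1) * t ≤ π / 2) :
    sin (M * y) < (quantumInt (M + 1) t + 1) * sin y := by
  have hy : 0 < y := ht.trans_le hty
  have hD : quantumInt (M + 1) t ≤ M + 1 :=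
    quantumInt_le (by linarith) ht (by linarith [pi_pos])
  have hsmall : (quantumInt (M + 1) t + 1) * y ^ 2 ≤ 6 := by
    nlinarith [pi_lt_four]
  have := mul_sub_sin_lt_sin hy hsmall
  linarith [sin_mul_le_quantumInt_mul (by linarith) ht hty hMy hMt]

theorem one_lt_quantumInt_mul_sin (hM : 0 < M) (ht : 0 < t) (hMt : (M + 1) * t ≤ π / 2)
    (hy : y ≤ π / 2) (hMy : π < M * y) : 1 < quantumInt (M + 1) t * sin y := by
  have hD := two_div_pi_mul_le_quantumInt (by linarith) ht hMt
  have hy0 : 0 < y := by nlinarith [pi_pos]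
  have hsy := mul_le_sin hy0.le hy
  have hπ := pi_pos
  calc 1 < 4 * (M + 1) * y / π ^ 2 := by
        rw [one_lt_div (by positivity)]
        nlinarith [pi_lt_four]
    _ = 2 / π * (M + 1) * (2 / π * y) := by field_simp; ring
    _ ≤ quantumInt (M + 1) t * sin y := by
        gcongr
        exact (by positivity : (0 : ℝ) ≤ 2 / π * (M + 1)).trans hD

theorem abs_sin_mul_lt_of_le_pi_div_two (hM : 4 ≤ M) (ht : 0 < t) (hMt : (M + 1) * t ≤ π / 2)
    (hty : t ≤ y) (hy : y ≤ π / 2) : |sin (M * y)| < (quantumInt (M + 1) t + 1) * sin y := by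
  have hy0 : 0 < y := ht.trans_le hty
  rcases le_or_gt (M * y) π with hMy | hMy
  · rw [abs_of_nonneg (sin_nonneg_of_nonneg_of_le_pi (by nlinarith) hMy)]
    exact sin_mul_lt_quantumInt_add_one_mul_sin hM ht hty hMy hMt
  · have hsy : 0 < sin y := sin_pos_of_pos_of_lt_pi hy0 (by linarith [pi_pos])
    calc |sin (M * y)| ≤ 1 := abs_sin_le_one _
      _ < quantumInt (M + 1) t * sin y := one_lt_quantumInt_mul_sin (by linarith) ht hMt hy hMy
      _ ≤ (quantumInt (M + 1) t + 1) * sin y := by linarith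

end

theorem abs_sin_nat_mul_pi_sub (n : ℕ) (y : ℝ) : |sin (n * (π - y))| = |sin (n * y)| := by
  rw [mul_sub, sin_nat_mul_pi_sub, abs_neg, abs_mul, abs_pow, abs_neg, abs_one, one_pow, one_mul]

theorem abs_sin_nat_mul_lt {n : ℕ} {t y : ℝ} (hn : 4 ≤ n) (ht : 0 < t)
    (hnt : (n + 1) * t ≤ π / 2) (hty : t ≤ y) (hyt : y ≤ π - t) :
    |sin (n * y)| < (quantumInt (n + 1) t + 1) * sin y := by
  have hn' : (4 : ℝ) ≤ n := by exact_mod_cast hn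
  rcases le_or_gt y (π / 2) with hy | hy
  · exact abs_sin_mul_lt_of_le_pi_div_two hn' ht hnt hty hy
  · rw [← abs_sin_nat_mul_pi_sub, ← sin_pi_sub y]
    exact abs_sin_mul_lt_of_le_pi_div_two hn' ht hnt (by linarith) (by linarith)

/-- For integers `k ≥ 2` and `ℓ` with `2(2k+1) < ℓ`, and every real `z` with
`1 ≤ z ≤ ℓ - 1`, the value `-h(z) = sin(2kzπ/ℓ)/sin(zπ/ℓ) - 1` is strictly less than
the positive character value `Dim(□) = sin((2k+1)π/ℓ)/sin(π/ℓ)`. -/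
theorem typeBC_neg_dim_lt_positive_character (k ℓ : ℕ) (hk : 2 ≤ k)
    (hℓ : 2 * (2 * k + 1) < ℓ) (z : ℝ) (hz1 : 1 ≤ z) (hz2 : z ≤ (ℓ : ℝ) - 1) :
    Real.sin (2 * k * z * Real.pi / ℓ) / Real.sin (z * Real.pi / ℓ) - 1 <
      Real.sin ((2 * k + 1) * Real.pi / ℓ) / Real.sin (Real.pi / ℓ) := by
  have hℓ' : 2 * (2 * (k : ℝ) + 1) < ℓ := by exact_mod_cast hℓ
  have hℓ0 : (0 : ℝ) < ℓ := by linarith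
  have ht : 0 < π / ℓ := div_pos pi_pos hℓ0
  have hty : π / ℓ ≤ z * π / ℓ := by gcongr; exact le_mul_of_one_le_left pi_pos.le hz1
  have hyt : z * π / ℓ ≤ π - π / ℓ := by
    rw [div_le_iff₀ hℓ0, sub_mul, div_mul_cancel₀ _ hℓ0.ne']; nlinarith [pi_pos]
  have hnt : ((2 * k : ℕ) + 1 : ℝ) * (π / ℓ) ≤ π / 2 := by
    push_cast; rw [← mul_div_assoc, div_le_div_iff₀ hℓ0 two_pos]; nlinarith [pi_pos]
  have hsy : 0 < sin (z * π / ℓ) :=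
    sin_pos_of_pos_of_lt_pi (ht.trans_le hty) (by linarith)
  have key := abs_sin_nat_mul_lt (by omega) ht hnt hty hyt
  rw [quantumInt] at key
  push_cast at key
  rw [show 2 * k * z * π / ℓ = 2 * k * (z * π / ℓ) by ring,
    show (2 * k + 1) * π / ℓ = (2 * k + 1) * (π / ℓ) by ring, sub_lt_iff_lt_add, div_lt_iff₀ hsy]
  exact (le_abs_self _).trans_lt key
end

section
/- Let k ≥ 2 and ℓ be integers with 2(2k+1) < ℓ. Then for every integer z with 1 ≤ z ≤ ℓ−1 and gcd(z, ℓ) = 1, |1 − sin(2kzπ/ℓ)/sin(zπ/ℓ)| ≠ sin((2k+1)π/ℓ)/sin(π/ℓ). [This says that no specialization of the quantum dimension character of the type BC Turaev–Wenzl category equals the unique positive character on the generating object, which is the key step in proving that none of these categories is unitarizable.] -/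
/-!
Put `t = π/ℓ` and `x = z t`, so that `h(z) = 1 - sin(2kx)/sin x` and `Dim(□) = sin((2k+1)t)/sin t`.
For `z = ℓ - 1` one has `h(z) = 1 + sin(2kt)/sin t > Dim(□)` because `sin(2kt + t) < sin(2kt) + sin t`;
for `z = 1` both `sin t` and `sin(2kt)` lie below `sin((2k+1)t)`, so `|h(z)| < Dim(□)`.
For `2 ≤ z ≤ ℓ - 2` it suffices, by `x ↦ π - x`, to treat `x ∈ [2t, π/2]` and show
`|sin(2kx)| sin t < (sin((2k+1)t) - sin t) sin x`. If `2kx ≤ π`, expand both sides as cosine sums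
`sin(2kx) = 2 sin x ∑ cos((2j+1)x)` and `sin((2k+1)t) - sin t = 2 sin t ∑ cos((2j+2)t)`,
and compare termwise. Otherwise `sin x ≥ 1/k`, and Jordan's inequality
`sin((2k+1)t) ≥ 2(2k+1)t/π` makes the right side exceed `t ≥ sin t`.
-/

open Real Finset

theorem sin_add_two_mul_sub_sin_eq_sum (y x : ℝ) (n : ℕ) :
    sin (y + 2 * n * x) - sin y = 2 * sin x * ∑ j ∈ range n, cos (y + (2 * j + 1) * x) := by
  induction n with
  | zero => simp
  | succ n ih =>
    have hstep : sin (y + 2 * (n + 1 : ℕ) * x) - sin (y + 2 * n * x) =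
        2 * sin x * cos (y + (2 * n + 1) * x) := by
      rw [sin_sub_sin]
      push_cast
      ring_nf
    rw [sum_range_succ, mul_add, ← ih, ← hstep]
    ring

theorem sin_two_mul_mul_sin_lt {k : ℕ} (hk : 2 ≤ k) {t x : ℝ} (ht : 0 < t) (hx : 2 * t ≤ x)
    (hkx : 2 * k * x ≤ π) :
    sin (2 * k * x) * sin t < (sin ((2 * k + 1) * t) - sin t) * sin x := by
  have hk' : (2 : ℝ) ≤ k := by exact_mod_cast hk
  have hsin_x : 0 < sin x := sin_pos_of_pos_of_lt_pi (by linarith) (by nlinarith)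
  have hsin_t : 0 < sin t := sin_pos_of_pos_of_lt_pi ht (by nlinarith)
  have hterm : ∀ j ∈ range k, cos (0 + (2 * j + 1) * x) ≤ cos (t + (2 * j + 1) * t) := by
    intro j hj
    have hj : (j : ℝ) + 1 ≤ k := by exact_mod_cast mem_range.mp hj
    exact cos_le_cos_of_nonneg_of_le_pi (by positivity) (by nlinarith) (by nlinarith)
  have hsum : ∑ j ∈ range k, cos (0 + (2 * j + 1) * x) <
      ∑ j ∈ range k, cos (t + (2 * j + 1) * t) :=
    -- the `j = 0` terms may coincide (when `x = 2t`), so strictness comes from `j = 1`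
    sum_lt_sum hterm ⟨1, mem_range.mpr hk,
      cos_lt_cos_of_nonneg_of_le_pi (by positivity) (by push_cast; nlinarith)
        (by push_cast; linarith)⟩
  calc sin (2 * k * x) * sin t = (sin (0 + 2 * k * x) - sin 0) * sin t := by simp
    _ = 2 * sin x * sin t * ∑ j ∈ range k, cos (0 + (2 * j + 1) * x) := by
      rw [sin_add_two_mul_sub_sin_eq_sum]; ring
    _ < 2 * sin x * sin t * ∑ j ∈ range k, cos (t + (2 * j + 1) * t) := by gcongr
    _ = (sin (t + 2 * k * t) - sin t) * sin x := by
      rw [sin_add_two_mul_sub_sin_eq_sum]; ring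
    _ = (sin ((2 * k + 1) * t) - sin t) * sin x := by ring_nf

theorem sin_lt_sub_mul_sin_of_pi_div_le {k : ℕ} (hk : 2 ≤ k) {t x : ℝ} (ht : 0 < t)
    (hkt : (2 * k + 1) * t ≤ π / 2) (hx : π / (2 * k) ≤ x) (hx' : x ≤ π / 2) :
    sin t < (sin ((2 * k + 1) * t) - sin t) * sin x := by
  have hk' : (2 : ℝ) ≤ k := by exact_mod_cast hk
  have hx0 : 0 ≤ x := hx.trans' (by positivity)
  have hk_sin_x : 1 ≤ k * sin x := by
    have hjordan := mul_le_sin hx0 hx'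
    rw [div_le_iff₀ (by positivity)] at hx
    calc (1 : ℝ) = 2 / π * (π / 2) := by field_simp
      _ ≤ 2 / π * (x * k) := by gcongr; linarith
      _ ≤ k * sin x := by nlinarith
  have hgap : k * t < sin ((2 * k + 1) * t) - sin t := by
    have hjordan := mul_le_sin (by positivity) hkt
    have hπ : (k + 1) * π < 2 * (2 * k + 1) := by nlinarith [pi_lt_d2]
    have h : (k + 1) * t < 2 / π * ((2 * k + 1) * t) := by
      rw [div_mul_eq_mul_div, lt_div_iff₀ pi_pos]; nlinarith
    linarith [sin_le ht.le]
  have hsin_x : 0 < sin x := pos_of_mul_pos_right (one_pos.trans_le hk_sin_x) (by positivity)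
  calc sin t ≤ t * 1 := by rw [mul_one]; exact sin_le ht.le
    _ ≤ t * (k * sin x) := by gcongr
    _ = k * t * sin x := by ring
    _ < (sin ((2 * k + 1) * t) - sin t) * sin x := by gcongr

theorem abs_sin_two_mul_mul_sin_lt {k : ℕ} (hk : 2 ≤ k) {t x : ℝ} (ht : 0 < t)
    (hkt : (2 * k + 1) * t ≤ π / 2) (hx : 2 * t ≤ x) (hx' : x ≤ π / 2) :
    |sin (2 * k * x)| * sin t < (sin ((2 * k + 1) * t) - sin t) * sin x := by
  have hk' : (2 : ℝ) ≤ k := by exact_mod_cast hk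
  rcases le_or_gt (2 * k * x) π with hkx | hkx
  · rw [abs_of_nonneg (sin_nonneg_of_nonneg_of_le_pi (by nlinarith) hkx)]
    exact sin_two_mul_mul_sin_lt hk ht hx hkx
  · have hsin_t : 0 < sin t := sin_pos_of_pos_of_lt_pi ht (by nlinarith [pi_pos])
    calc |sin (2 * k * x)| * sin t ≤ sin t := mul_le_of_le_one_left hsin_t.le (abs_sin_le_one _)
      _ < _ := sin_lt_sub_mul_sin_of_pi_div_le hk ht hkt
        (by rw [div_le_iff₀ (by positivity)]; linarith) hx'

theorem abs_sin_two_mul_mul_sin_lt_of_le_pi_sub {k : ℕ} (hk : 2 ≤ k) {t x : ℝ} (ht : 0 < t)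
    (hkt : (2 * k + 1) * t ≤ π / 2) (hx : 2 * t ≤ x) (hx' : x ≤ π - 2 * t) :
    |sin (2 * k * x)| * sin t < (sin ((2 * k + 1) * t) - sin t) * sin x := by
  rcases le_total x (π / 2) with h | h
  · exact abs_sin_two_mul_mul_sin_lt hk ht hkt hx h
  · have hreflect := abs_sin_two_mul_mul_sin_lt hk ht hkt (x := π - x) (by linarith) (by linarith)
    rwa [sin_pi_sub, show 2 * k * (π - x) = k * (2 * π) - 2 * k * x by ring,
      sin_nat_mul_two_pi_sub, abs_neg] at hreflect

theorem abs_one_sub_sin_div_sin_lt {k : ℕ} (hk : 2 ≤ k) {t x : ℝ} (ht : 0 < t)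
    (hkt : (2 * k + 1) * t ≤ π / 2) (hx : 2 * t ≤ x) (hx' : x ≤ π - 2 * t) :
    |1 - sin (2 * k * x) / sin x| < sin ((2 * k + 1) * t) / sin t := by
  have hsin_x : 0 < sin x := sin_pos_of_pos_of_lt_pi (by linarith) (by linarith)
  have hsin_t : 0 < sin t := sin_pos_of_pos_of_lt_pi ht (by linarith)
  rw [one_sub_div hsin_x.ne', abs_div, abs_of_pos hsin_x, div_lt_div_iff₀ hsin_x hsin_t]
  have htriangle : |sin x - sin (2 * k * x)| ≤ sin x + |sin (2 * k * x)| :=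
    (abs_sub _ _).trans_eq (by rw [abs_of_pos hsin_x])
  nlinarith [abs_sin_two_mul_mul_sin_lt_of_le_pi_sub hk ht hkt hx hx']

theorem abs_one_sub_sin_div_sin_self_lt {k : ℕ} (hk : 0 < k) {t : ℝ} (ht : 0 < t)
    (hkt : (2 * k + 1) * t ≤ π / 2) :
    |1 - sin (2 * k * t) / sin t| < sin ((2 * k + 1) * t) / sin t := by
  have hk' : (1 : ℝ) ≤ k := by exact_mod_cast hk
  have hsin_t : 0 < sin t := sin_pos_of_pos_of_lt_pi ht (by nlinarith [pi_pos])
  have hsin_kt : 0 < sin (2 * k * t) := sin_pos_of_pos_of_lt_pi (by positivity) (by nlinarith)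
  have hmono : ∀ y, 0 ≤ y → y ≤ (2 * k + 1) * t → sin y ≤ sin ((2 * k + 1) * t) :=
    fun y hy hy' ↦ sin_le_sin_of_le_of_le_pi_div_two (by linarith [pi_pos]) hkt hy'
  rw [one_sub_div hsin_t.ne', abs_div, abs_of_pos hsin_t,
    div_lt_div_iff_of_pos_right hsin_t, abs_sub_lt_iff]
  constructor
  · linarith [hmono t ht.le (by nlinarith)]
  · linarith [hmono (2 * k * t) (by positivity) (by linarith)]

theorem sin_add_lt_sin_add_sin {a b : ℝ} (ha : 0 < a) (ha' : a < π) (hb : 0 < b) (hb' : b < π) :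
    sin (a + b) < sin a + sin b := by
  have hcos_b : cos b < 1 := by
    simpa using cos_lt_cos_of_nonneg_of_le_pi le_rfl hb'.le hb
  rw [sin_add]
  nlinarith [sin_pos_of_pos_of_lt_pi ha ha', sin_pos_of_pos_of_lt_pi hb hb', cos_le_one a]

theorem sin_div_sin_lt_abs_one_sub_sin_div_sin_pi_sub {k : ℕ} (hk : 0 < k) {t : ℝ} (ht : 0 < t)
    (hkt : (2 * k + 1) * t ≤ π) :
    sin ((2 * k + 1) * t) / sin t < |1 - sin (2 * k * (π - t)) / sin (π - t)| := by
  have hk' : (1 : ℝ) ≤ k := by exact_mod_cast hk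
  have hsin_t : 0 < sin t := sin_pos_of_pos_of_lt_pi ht (by nlinarith)
  have hkt_pos : 0 < 2 * k * t := by positivity
  rw [sin_pi_sub, show 2 * k * (π - t) = k * (2 * π) - 2 * k * t by ring,
    sin_nat_mul_two_pi_sub, neg_div, sub_neg_eq_add,
    abs_of_pos (by positivity [sin_pos_of_pos_of_lt_pi hkt_pos (by linarith)]),
    one_add_div hsin_t.ne', div_lt_div_iff_of_pos_right hsin_t]
  calc sin ((2 * k + 1) * t) = sin (2 * k * t + t) := by ring_nf
    _ < sin (2 * k * t) + sin t := sin_add_lt_sin_add_sin hkt_pos (by linarith) ht (by linarith)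
    _ = sin t + sin (2 * k * t) := add_comm _ _

theorem typeBC_dim_ne_positive_character_general (k ℓ : ℕ) (hk : 2 ≤ k)
    (hℓ : 2 * (2 * k + 1) < ℓ) (z : ℕ) (hz1 : 1 ≤ z) (hz2 : z ≤ ℓ - 1) :
    |1 - Real.sin (2 * k * z * Real.pi / ℓ) / Real.sin (z * Real.pi / ℓ)| ≠
      Real.sin ((2 * k + 1) * Real.pi / ℓ) / Real.sin (Real.pi / ℓ) := by
  have hℓ0 : (0 : ℝ) < ℓ := by exact_mod_cast (show 0 < ℓ by omega)
  set t := π / ℓ with ht_def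
  have ht : 0 < t := by positivity
  have hℓt : ℓ * t = π := mul_div_cancel₀ _ hℓ0.ne'
  have hkt : (2 * k + 1) * t ≤ π / 2 := by
    have : 2 * (2 * (k : ℝ) + 1) ≤ ℓ := by exact_mod_cast hℓ.le
    rw [← hℓt]; nlinarith
  simp only [mul_div_assoc, ← ht_def, mul_assoc (2 * (k : ℝ))]
  obtain rfl | hz1 := hz1.eq_or_lt
  · simpa using (abs_one_sub_sin_div_sin_self_lt (by omega) ht hkt).ne
  obtain rfl | hz2 := hz2.eq_or_lt
  · have hx : ((ℓ - 1 : ℕ) : ℝ) * t = π - t := by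
      rw [Nat.cast_sub (by omega), sub_mul, hℓt, Nat.cast_one, one_mul]
    rw [hx]
    exact (sin_div_sin_lt_abs_one_sub_sin_div_sin_pi_sub (by omega) ht
      (by linarith [pi_pos])).ne'
  · have hz : (z : ℝ) + 2 ≤ ℓ := by exact_mod_cast (show z + 2 ≤ ℓ by omega)
    have hz' : (2 : ℝ) ≤ z := by exact_mod_cast hz1
    exact (abs_one_sub_sin_div_sin_lt hk ht hkt (by nlinarith) (by nlinarith)).ne

/-- For integers `k ≥ 2` and `ℓ` with `2(2k+1) < ℓ`, and every integer `z` with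
`1 ≤ z ≤ ℓ - 1` and `gcd(z, ℓ) = 1`, the absolute value of the quantum-dimension
character `h(z) = 1 - sin(2kzπ/ℓ)/sin(zπ/ℓ)` on the generating object differs from the
value `Dim(□) = sin((2k+1)π/ℓ)/sin(π/ℓ)` of the unique positive character. -/
theorem typeBC_dim_ne_positive_character (k ℓ : ℕ) (hk : 2 ≤ k)
    (hℓ : 2 * (2 * k + 1) < ℓ) (z : ℕ) (hz1 : 1 ≤ z) (hz2 : z ≤ ℓ - 1)
    (hgcd : Nat.gcd z ℓ = 1) :
    |1 - Real.sin (2 * k * z * Real.pi / ℓ) / Real.sin (z * Real.pi / ℓ)| ≠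
      Real.sin ((2 * k + 1) * Real.pi / ℓ) / Real.sin (Real.pi / ℓ) :=
  typeBC_dim_ne_positive_character_general k ℓ hk hℓ z hz1 hz2
end

section
/- For all integers k ≥ 2 and ℓ > 3k − 1, 1 + sin(4kπ/ℓ)/sin(2π/ℓ) < sin((2k+1)π/ℓ)/sin(π/ℓ). [This is the strict inequality g(2) < Dim(□), proved by writing the difference as 4·Σ_{j=1}^k sin((3j−1)π/ℓ)·sin((j−1)π/ℓ), a sum of nonnegative terms that is strictly positive when k ≥ 2 and 3k−1 < ℓ.] -/
open Real

private lemma sin_step (x s : ℝ) :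
    Real.sin (x + 2*s) = Real.sin x + 2 * Real.sin s * Real.cos (x + s) := by
  have h := Real.sin_sub_sin (x + 2*s) x
  have h1 : (x + 2*s - x)/2 = s := by ring
  have h2 : (x + 2*s + x)/2 = x + s := by ring
  rw [h1, h2] at h
  linarith

private lemma id1 (s : ℝ) (k : ℕ) :
    Real.sin ((2*(k:ℝ)+1)*s)
      = Real.sin s * (1 + 2 * ∑ j ∈ Finset.range k, Real.cos ((2*(j:ℝ)+2)*s)) := by
  induction k with
  | zero => simp
  | succ n ih =>
    have e : (2*((n:ℝ)+1)+1)*s = (2*(n:ℝ)+1)*s + 2*s := by ring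
    rw [Finset.sum_range_succ]
    push_cast
    rw [e, sin_step, ih]
    have e2 : (2*(n:ℝ)+1)*s + s = (2*(n:ℝ)+2)*s := by ring
    rw [e2]
    ring

private lemma id2 (s : ℝ) (k : ℕ) :
    Real.sin (4*(k:ℝ)*s)
      = Real.sin (2*s) * (2 * ∑ j ∈ Finset.range k, Real.cos ((4*(j:ℝ)+2)*s)) := by
  induction k with
  | zero => simp
  | succ n ih =>
    have e : 4*((n:ℝ)+1)*s = 4*(n:ℝ)*s + 2*(2*s) := by ring
    rw [Finset.sum_range_succ]
    push_cast
    rw [e, sin_step, ih]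
    have e2 : 4*(n:ℝ)*s + 2*s = (4*(n:ℝ)+2)*s := by ring
    rw [e2]
    ring

private lemma cos_term (s : ℝ) (j : ℕ) :
    Real.cos ((2*(j:ℝ)+2)*s) - Real.cos ((4*(j:ℝ)+2)*s)
      = 2 * Real.sin ((3*(j:ℝ)+2)*s) * Real.sin ((j:ℝ)*s) := by
  have h := Real.cos_sub_cos ((2*(j:ℝ)+2)*s) ((4*(j:ℝ)+2)*s)
  have e1 : ((2*(j:ℝ)+2)*s + (4*(j:ℝ)+2)*s)/2 = (3*(j:ℝ)+2)*s := by ring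
  have e2 : ((2*(j:ℝ)+2)*s - (4*(j:ℝ)+2)*s)/2 = -((j:ℝ)*s) := by ring
  rw [e1, e2, Real.sin_neg] at h
  linarith

private lemma key (k : ℕ) (s : ℝ) (hk : 2 ≤ k) (hs : 0 < s)
    (h : (3*(k:ℝ) - 1) * s < Real.pi) :
    1 + Real.sin (4*(k:ℝ)*s) / Real.sin (2*s)
      < Real.sin ((2*(k:ℝ)+1)*s) / Real.sin s := by
  have hk2 : (2:ℝ) ≤ (k:ℝ) := by exact_mod_cast hk
  have hk5 : (5:ℝ) ≤ 3*(k:ℝ) - 1 := by linarith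
  have hsπ : s < Real.pi := by nlinarith
  have h2s : 2*s < Real.pi := by nlinarith
  have hsin : 0 < Real.sin s := Real.sin_pos_of_pos_of_lt_pi hs hsπ
  have hsin2 : 0 < Real.sin (2*s) := Real.sin_pos_of_pos_of_lt_pi (by linarith) h2s
  rw [id1 s k, id2 s k, mul_div_cancel_left₀ _ (ne_of_gt hsin),
    mul_div_cancel_left₀ _ (ne_of_gt hsin2)]
  have hsum : ∑ j ∈ Finset.range k, Real.cos ((4*(j:ℝ)+2)*s)
      < ∑ j ∈ Finset.range k, Real.cos ((2*(j:ℝ)+2)*s) := by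
    have hbound : ∀ j ∈ Finset.range k,
        Real.cos ((4*(j:ℝ)+2)*s) ≤ Real.cos ((2*(j:ℝ)+2)*s) := by
      intro j hj
      have hjk : (j:ℝ) ≤ (k:ℝ) - 1 := by
        have := Finset.mem_range.mp hj
        have : (j:ℝ) + 1 ≤ (k:ℝ) := by exact_mod_cast this
        linarith
      have ha : 0 ≤ (3*(j:ℝ)+2)*s := by positivity
      have hb : (3*(j:ℝ)+2)*s ≤ Real.pi := by nlinarith
      have hc : 0 ≤ (j:ℝ)*s := by positivity
      have hd : (j:ℝ)*s ≤ Real.pi := by nlinarith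
      have h1 := Real.sin_nonneg_of_nonneg_of_le_pi ha hb
      have h2 := Real.sin_nonneg_of_nonneg_of_le_pi hc hd
      nlinarith [cos_term s j]
    apply Finset.sum_lt_sum hbound
    refine ⟨1, Finset.mem_range.mpr (by omega), ?_⟩
    have h5 : 0 < Real.sin ((3*((1:ℕ):ℝ)+2)*s) := by
      apply Real.sin_pos_of_pos_of_lt_pi
      · push_cast; nlinarith
      · push_cast; nlinarith
    have hsj : 0 < Real.sin (((1:ℕ):ℝ)*s) := by
      push_cast
      rw [one_mul]; exact hsin
    linarith [cos_term s 1, mul_pos h5 hsj]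
  linarith

/-- For integers `k ≥ 2` and `ℓ > 3k - 1`, the strict inequality `g(2) < Dim(□)` holds:
`1 + sin(4kπ/ℓ)/sin(2π/ℓ) < sin((2k+1)π/ℓ)/sin(π/ℓ)`. -/
theorem g_two_lt_Dim (k ℓ : ℕ) (hk : 2 ≤ k) (hℓ : 3 * (k : ℤ) - 1 < (ℓ : ℤ)) :
    1 + Real.sin (4 * k * Real.pi / ℓ) / Real.sin (2 * Real.pi / ℓ) <
      Real.sin ((2 * k + 1) * Real.pi / ℓ) / Real.sin (Real.pi / ℓ) := by
  have hℓ0 : 0 < ℓ := by omega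
  have hℓ0' : (0:ℝ) < (ℓ:ℝ) := by exact_mod_cast hℓ0
  set s := Real.pi / ℓ with hsdef
  have hs : 0 < s := div_pos Real.pi_pos hℓ0'
  have hlt : (3*(k:ℝ) - 1) < (ℓ:ℝ) := by exact_mod_cast hℓ
  have hπ : (3*(k:ℝ) - 1) * s < Real.pi := by
    have h1 : (3*(k:ℝ) - 1) * s < (ℓ:ℝ) * s := by
      apply mul_lt_mul_of_pos_right hlt hs
    have h2 : (ℓ:ℝ) * s = Real.pi := by
      rw [hsdef]; field_simp
    linarith
  have hmain := key k s hk hs hπ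
  have e1 : 4 * (k:ℝ) * Real.pi / ℓ = 4*(k:ℝ)*s := by rw [hsdef]; ring
  have e2 : (2 * (k:ℝ) + 1) * Real.pi / ℓ = (2*(k:ℝ)+1)*s := by rw [hsdef]; ring
  have e3 : 2 * Real.pi / (ℓ:ℝ) = 2*s := by rw [hsdef]; ring
  rw [e1, e2, e3]
  exact hmain
end

section
/- For all integers k ≥ 1 and ℓ with 2(2k+1) < ℓ, sin((2k+1)π/ℓ)/sin(π/ℓ) > 2(2k+1)/π. [This lower bound on Dim(□) is used together with the estimate on the middle interval I₃ to rule out unitarity.] -/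
open Real

/- Jordan's inequality `sin x ≥ 2x/π` on `[0, π/2]` bounds the numerator from below, and
`sin θ < θ` bounds the denominator from above. -/

theorem two_mul_div_pi_lt_sin_mul_div_sin {a θ : ℝ} (ha : 0 < a) (hθ : 0 < θ) (hθπ : θ < π)
    (haθ : a * θ ≤ π / 2) : 2 * a / π < sin (a * θ) / sin θ := by
  have hsin_pos : 0 < sin θ := sin_pos_of_pos_of_lt_pi hθ hθπ
  have hjordan : 2 / π * (a * θ) ≤ sin (a * θ) := mul_le_sin (by positivity) haθ
  calc 2 * a / π
      = 2 / π * (a * θ) / θ := by field_simp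
    _ < 2 / π * (a * θ) / sin θ := div_lt_div_of_pos_left (by positivity) hsin_pos (sin_lt hθ)
    _ ≤ sin (a * θ) / sin θ := by gcongr

theorem Dim_gt_linear_bound_general (k ℓ : ℕ) (hℓ : 2 * (2 * k + 1) < ℓ) :
    Real.sin ((2 * k + 1) * Real.pi / ℓ) / Real.sin (Real.pi / ℓ) >
      2 * (2 * (k : ℝ) + 1) / Real.pi := by
  have hk : (0 : ℝ) ≤ k := k.cast_nonneg
  have hℓR : 2 * (2 * (k : ℝ) + 1) < ℓ := by exact_mod_cast hℓ
  have hℓ_pos : (0 : ℝ) < ℓ := by linarith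
  rw [mul_div_assoc]
  refine two_mul_div_pi_lt_sin_mul_div_sin (by positivity) (by positivity) ?_ ?_
  · rw [div_lt_iff₀ hℓ_pos]
    nlinarith [pi_pos]
  · rw [← mul_div_assoc, div_le_div_iff₀ hℓ_pos two_pos]
    nlinarith [pi_pos]

/-- For integers `k ≥ 1` and `ℓ` with `2(2k+1) < ℓ`, the positive character value
`Dim(□) = sin((2k+1)π/ℓ)/sin(π/ℓ)` exceeds `2(2k+1)/π`. -/
theorem Dim_gt_linear_bound (k ℓ : ℕ) (hk : 1 ≤ k) (hℓ : 2 * (2 * k + 1) < ℓ) :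
    Real.sin ((2 * k + 1) * Real.pi / ℓ) / Real.sin (Real.pi / ℓ) >
      2 * (2 * (k : ℝ) + 1) / Real.pi :=
  Dim_gt_linear_bound_general k ℓ hℓ
end

section
/- Let k ≥ 1 be an integer and set a := π²/(4(2k+1) − 2π). Then for every real t with a ≤ t ≤ π − a, 1/sin(t) + 1 ≤ 2(2k+1)/π. [This is the estimate on the middle interval I₃, obtained by approximating sin from below by the piecewise-linear function 1 − |2t/π − 1|.] -/
open Real

/-- For an integer `k ≥ 1`, setting `a = π²/(4(2k+1) - 2π)`, for every real `t` with
`a ≤ t ≤ π - a` one has `1/sin(t) + 1 ≤ 2(2k+1)/π`. -/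
theorem middle_interval_estimate (k : ℕ) (hk : 1 ≤ k) (t : ℝ)
    (ht1 : Real.pi ^ 2 / (4 * (2 * (k : ℝ) + 1) - 2 * Real.pi) ≤ t)
    (ht2 : t ≤ Real.pi - Real.pi ^ 2 / (4 * (2 * (k : ℝ) + 1) - 2 * Real.pi)) :
    1 / Real.sin t + 1 ≤ 2 * (2 * (k : ℝ) + 1) / Real.pi := by
  have hpi := Real.pi_pos
  have hpi4 := Real.pi_lt_d2
  have hk' : (1 : ℝ) ≤ (k : ℝ) := by exact_mod_cast hk
  set N : ℝ := 2 * (k : ℝ) + 1 with hN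
  have hN3 : (3 : ℝ) ≤ N := by simp [hN]; linarith
  have hden : 0 < 4 * N - 2 * Real.pi := by linarith
  set a : ℝ := Real.pi ^ 2 / (4 * N - 2 * Real.pi) with ha
  have ha0 : 0 < a := by positivity
  -- key: 2/π * a = 2π/(4N - 2π) and 1/(that) + 1 = 2N/π
  have hmin : a ≤ min t (Real.pi - t) := le_min ht1 (by linarith)
  have hsin : 2 / Real.pi * a ≤ Real.sin t := by
    rcases le_or_gt t (Real.pi / 2) with h | h
    · calc 2 / Real.pi * a ≤ 2 / Real.pi * t := by
            have := hmin.trans (min_le_left _ _)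
            exact mul_le_mul_of_nonneg_left this (by positivity)
        _ ≤ Real.sin t := Real.mul_le_sin (by linarith) h
    · have h2 : 2 / Real.pi * a ≤ 2 / Real.pi * (Real.pi - t) := by
        have := hmin.trans (min_le_right _ _)
        exact mul_le_mul_of_nonneg_left this (by positivity)
      have := Real.mul_le_sin (x := Real.pi - t) (by linarith) (by linarith)
      rw [Real.sin_pi_sub] at this
      linarith
  have hsin0 : 0 < Real.sin t := lt_of_lt_of_le (by positivity) hsin
  have h1 : 1 / Real.sin t ≤ 1 / (2 / Real.pi * a) := by
    apply one_div_le_one_div_of_le (by positivity) hsin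
  have h2 : 1 / (2 / Real.pi * a) = 2 * N / Real.pi - 1 := by
    rw [ha]
    field_simp
    ring
  linarith
end
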